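/- arXiv:2308.07755 — 11 statements merged into one kernel-verified Lean document; each statement's English description precedes it below -/
import Mathlib

section
/- Let (A,[-,-,-],d) be a modified λ-differential 3-Lie algebra over k. On the exterior square ∧²A define the bilinear bracket determined on generators by [a1∧a2, b1∧b2]_F = [a1,a2,b1]∧b2 + b1∧[a1,a2,b2], and the linear map d_F determined by d_F(a1∧a2) = d(a1)∧a2 + a1∧d(a2) + λ·(a1∧a2). Then (∧²A, [-,-]_F, d_F) is a Leibniz algebra with a derivation; in particular, for all a1,a2,b1,b2 ∈ A one has d_F([a1∧a2, b1∧b2]_F) = [d_F(a1∧a2), b1∧b2]_F + [a1∧a2, d_F(b1∧b2)]_F. -/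
open Finset

section Prelude

variable (k : Type*) {A W M : Type*} [Field k] [CharZero k]
  [AddCommGroup A] [Module k A] [AddCommGroup W] [Module k W]
  [AddCommGroup M] [Module k M]

/-- A trilinear, totally skew-symmetric map `A × A × A → W`. -/
def IsTriSkew (f : A → A → A → W) : Prop :=
  (∀ (t : k) (a a' b c : A), f (t • a + a') b c = t • f a b c + f a' b c) ∧
  (∀ (t : k) (a b b' c : A), f a (t • b + b') c = t • f a b c + f a b' c) ∧
  (∀ (t : k) (a b c c' : A), f a b (t • c + c') = t • f a b c + f a b c') ∧
  (∀ a b c : A, f a b c = - f b a c) ∧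
  (∀ a b c : A, f a b c = - f a c b)

/-- `br` makes `A` a 3-Lie algebra: it is trilinear, totally skew-symmetric and
satisfies the Filippov identity. -/
def Is3LieBr (br : A → A → A → A) : Prop :=
  IsTriSkew k br ∧
  ∀ a1 a2 a3 a4 a5 : A, br a1 a2 (br a3 a4 a5) =
    br (br a1 a2 a3) a4 a5 + br a3 (br a1 a2 a4) a5 + br a3 a4 (br a1 a2 a5)

/-- `d` is a modified `lam`-differential operator on `(A, br)`. -/
def IsMDiffOn (br : A → A → A → A) (lam : k) (d : A → A) : Prop :=
  ∀ a b c : A, d (br a b c) =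
    br (d a) b c + br a (d b) c + br a b (d c) + lam • br a b c

/-- `ρ` is a representation of the 3-Lie algebra `(A, br)` on `M`. -/
def Is3LieRep (br : A → A → A → A) (ρ : A → A → M →ₗ[k] M) : Prop :=
  (∀ (t : k) (a a' b : A), ρ (t • a + a') b = t • ρ a b + ρ a' b) ∧
  (∀ (t : k) (a b b' : A), ρ a (t • b + b') = t • ρ a b + ρ a b') ∧
  (∀ a b : A, ρ a b = - ρ b a) ∧
  (∀ a1 a2 a3 a4 : A, ρ (br a1 a2 a3) a4 =
    ρ a2 a3 ∘ₗ ρ a1 a4 + ρ a3 a1 ∘ₗ ρ a2 a4 + ρ a1 a2 ∘ₗ ρ a3 a4) ∧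
  (∀ a1 a2 a3 a4 : A, ρ a1 a2 ∘ₗ ρ a3 a4 =
    ρ a3 a4 ∘ₗ ρ a1 a2 + ρ (br a1 a2 a3) a4 + ρ a3 (br a1 a2 a4))

/-- Compatibility of `dM` making `(M, ρ, dM)` a representation of the modified
`lam`-differential 3-Lie algebra `(A, br, d)`. -/
def IsMDiffRep (ρ : A → A → M →ₗ[k] M) (lam : k) (d : A → A) (dM : M → M) : Prop :=
  ∀ (a b : A) (v : M), dM (ρ a b v) =
    ρ (d a) b v + ρ a (d b) v + ρ a b (dM v) + lam • ρ a b v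

end Prelude

open ExteriorAlgebra in
/-- The wedge `a₁ ∧ a₂`, as an element of the exterior square `⋀[k]^2 A`. -/
noncomputable def wedge2 (k : Type*) {A : Type*} [Field k] [AddCommGroup A] [Module k A]
    (a b : A) : ⋀[k]^2 A :=
  ⟨ιMulti k 2 ![a, b], ιMulti_range k 2 (Set.mem_range_self _)⟩

section WedgeAux

open ExteriorAlgebra

variable {k A : Type*} [Field k] [AddCommGroup A] [Module k A]

omit [Field k] [AddCommGroup A] [Module k A] in
private lemma upd0' (a b c : A) : Function.update ![a, b] 0 c = ![c, b] := by
  ext i; fin_cases i <;> simp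

omit [Field k] [AddCommGroup A] [Module k A] in
private lemma upd1' (a b c : A) : Function.update ![a, b] 1 c = ![a, c] := by
  ext i; fin_cases i <;> simp

private lemma wedge2_add_left (x y b : A) :
    wedge2 k (x + y) b = wedge2 k x b + wedge2 k y b := by
  apply Subtype.ext
  have h := (ιMulti k 2 (M := A)).map_update_add ![x, b] 0 x y
  rw [upd0', upd0', upd0'] at h
  exact h

private lemma wedge2_add_right (a x y : A) :
    wedge2 k a (x + y) = wedge2 k a x + wedge2 k a y := by
  apply Subtype.ext
  have h := (ιMulti k 2 (M := A)).map_update_add ![a, x] 1 x y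
  rw [upd1', upd1', upd1'] at h
  exact h

private lemma wedge2_smul_left (c : k) (x b : A) :
    wedge2 k (c • x) b = c • wedge2 k x b := by
  apply Subtype.ext
  have h := (ιMulti k 2 (M := A)).map_update_smul ![x, b] 0 c x
  rw [upd0', upd0'] at h
  exact h

private lemma wedge2_smul_right (c : k) (a x : A) :
    wedge2 k a (c • x) = c • wedge2 k a x := by
  apply Subtype.ext
  have h := (ιMulti k 2 (M := A)).map_update_smul ![a, x] 1 c x
  rw [upd1', upd1'] at h
  exact h

private lemma wedge2_span :
    Submodule.span k (Set.range fun p : A × A => wedge2 k p.1 p.2) = ⊤ := by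
  apply Submodule.map_injective_of_injective (Submodule.injective_subtype (⋀[k]^2 A))
  rw [Submodule.map_span, Submodule.map_subtype_top]
  have himg : ((⋀[k]^2 A).subtype '' Set.range fun p : A × A => wedge2 k p.1 p.2) =
      Set.range (ιMulti k 2 (M := A)) := by
    ext x
    constructor
    · rintro ⟨_, ⟨⟨a, b⟩, rfl⟩, rfl⟩
      exact ⟨![a, b], rfl⟩
    · rintro ⟨v, rfl⟩
      have hv : v = ![v 0, v 1] := by ext i; fin_cases i <;> rfl
      exact ⟨wedge2 k (v 0) (v 1), ⟨⟨v 0, v 1⟩, rfl⟩, by rw [hv]; rfl⟩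
  rw [himg, ιMulti_span_fixedDegree]

private lemma wedge2_mem_top (x : ⋀[k]^2 A) :
    x ∈ Submodule.span k (Set.range fun p : A × A => wedge2 k p.1 p.2) := by
  rw [wedge2_span]; trivial

end WedgeAux

open ExteriorAlgebra in
/-- for a modified `λ`-differential 3-Lie algebra `(A, br, d)`, the exterior
square `⋀² A`, equipped with the bilinear bracket determined on generators by
`[a₁∧a₂, b₁∧b₂] = [a₁,a₂,b₁]∧b₂ + b₁∧[a₁,a₂,b₂]` and the linear map determined by
`d_F(a₁∧a₂) = d(a₁)∧a₂ + a₁∧d(a₂) + λ·(a₁∧a₂)`, is a Leibniz algebra with a derivation;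
in particular `d_F [x,y]_F = [d_F x, y]_F + [x, d_F y]_F`. -/
theorem stmt0 {k A : Type*} [Field k] [CharZero k] [AddCommGroup A] [Module k A]
    (br : A → A → A → A) (lam : k) (d : A →ₗ[k] A)
    (h3 : Is3LieBr k br) (hd : IsMDiffOn k br lam ⇑d)
    (brF : (⋀[k]^2 A) →ₗ[k] (⋀[k]^2 A) →ₗ[k] (⋀[k]^2 A))
    (hbrF : ∀ a1 a2 b1 b2 : A,
      brF (wedge2 k a1 a2) (wedge2 k b1 b2) =
        wedge2 k (br a1 a2 b1) b2 + wedge2 k b1 (br a1 a2 b2))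
    (dF : (⋀[k]^2 A) →ₗ[k] (⋀[k]^2 A))
    (hdF : ∀ a1 a2 : A,
      dF (wedge2 k a1 a2) =
        wedge2 k (d a1) a2 + wedge2 k a1 (d a2) + lam • wedge2 k a1 a2) :
    (∀ x y z : ⋀[k]^2 A, brF x (brF y z) = brF (brF x y) z + brF y (brF x z)) ∧
      (∀ x y : ⋀[k]^2 A, dF (brF x y) = brF (dF x) y + brF x (dF y)) := by
  obtain ⟨⟨_, _, _, _, _⟩, hF⟩ := h3
  -- generator cases
  have hLeib : ∀ a1 a2 b1 b2 c1 c2 : A,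
      brF (wedge2 k a1 a2) (brF (wedge2 k b1 b2) (wedge2 k c1 c2)) =
        brF (brF (wedge2 k a1 a2) (wedge2 k b1 b2)) (wedge2 k c1 c2) +
          brF (wedge2 k b1 b2) (brF (wedge2 k a1 a2) (wedge2 k c1 c2)) := by
    intro a1 a2 b1 b2 c1 c2
    have F1 := hF a1 a2 b1 b2 c1
    have F2 := hF a1 a2 b1 b2 c2
    simp only [hbrF, map_add, LinearMap.add_apply]
    rw [F1, F2]
    simp only [wedge2_add_left, wedge2_add_right]
    abel
  have hDer : ∀ a1 a2 b1 b2 : A,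
      dF (brF (wedge2 k a1 a2) (wedge2 k b1 b2)) =
        brF (dF (wedge2 k a1 a2)) (wedge2 k b1 b2) +
          brF (wedge2 k a1 a2) (dF (wedge2 k b1 b2)) := by
    intro a1 a2 b1 b2
    have D1 := hd a1 a2 b1
    have D2 := hd a1 a2 b2
    simp only [hbrF, hdF, map_add, map_smul, LinearMap.add_apply, LinearMap.smul_apply]
    rw [D1, D2]
    simp only [hbrF, wedge2_add_left, wedge2_add_right, wedge2_smul_left, wedge2_smul_right,
      smul_add]
    abel
  constructor
  · intro x y z
    induction wedge2_mem_top x using Submodule.span_induction generalizing y z with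
    | mem x hx =>
      obtain ⟨⟨a1, a2⟩, rfl⟩ := hx
      induction wedge2_mem_top y using Submodule.span_induction generalizing z with
      | mem y hy =>
        obtain ⟨⟨b1, b2⟩, rfl⟩ := hy
        induction wedge2_mem_top z using Submodule.span_induction with
        | mem z hz =>
          obtain ⟨⟨c1, c2⟩, rfl⟩ := hz
          exact hLeib a1 a2 b1 b2 c1 c2
        | zero => simp
        | add z1 z2 _ _ h1 h2 =>
          simp only [map_add]
          rw [h1, h2]; abel
        | smul c z _ h =>
          simp only [map_smul]
          rw [h]; module
      | zero => simp
      | add y1 y2 _ _ h1 h2 =>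
        simp only [map_add, LinearMap.add_apply]
        rw [h1, h2]; abel
      | smul c y _ h =>
        simp only [map_smul, LinearMap.smul_apply]
        rw [h]; module
    | zero => simp
    | add x1 x2 _ _ h1 h2 =>
      simp only [map_add, LinearMap.add_apply]
      rw [h1, h2]; abel
    | smul c x _ h =>
      simp only [map_smul, LinearMap.smul_apply]
      rw [h]; module
  · intro x y
    induction wedge2_mem_top x using Submodule.span_induction generalizing y with
    | mem x hx =>
      obtain ⟨⟨a1, a2⟩, rfl⟩ := hx
      induction wedge2_mem_top y using Submodule.span_induction with
      | mem y hy =>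
        obtain ⟨⟨b1, b2⟩, rfl⟩ := hy
        exact hDer a1 a2 b1 b2
      | zero => simp
      | add y1 y2 _ _ h1 h2 =>
        simp only [map_add]
        rw [h1, h2]; abel
      | smul c y _ h =>
        simp only [map_smul]
        rw [h]; module
    | zero => simp
    | add x1 x2 _ _ h1 h2 =>
      simp only [map_add, LinearMap.add_apply]
      rw [h1, h2]; abel
    | smul c x _ h =>
      simp only [map_smul, LinearMap.smul_apply]
      rw [h]; module
end

section
/- Let (A,[-,-,-],d) be a modified λ-differential 3-Lie algebra, let (M;ρ) be a representation of the 3-Lie algebra (A,[-,-,-]), and let d_M : M → M be a linear map. Then (M;ρ,d_M) is a representation of the modified λ-differential 3-Lie algebra (A,[-,-,-],d) if and only if for all a,b ∈ A and v ∈ M, (d_M + (λ/2)·id_M)(ρ(a,b)v) = ρ((d + (λ/2)·id_A)(a), b)v + ρ(a, (d + (λ/2)·id_A)(b))v + ρ(a,b)((d_M + (λ/2)·id_M)(v)), i.e. (M;ρ, d_M + (λ/2)·id_M) is a representation of the 3-Lie algebra with derivation (A,[-,-,-], d + (λ/2)·id_A). -/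
open Finset

/-- given a modified `λ`-differential 3-Lie algebra `(A, br, d)`, a
representation `(M, ρ)` of the underlying 3-Lie algebra and a linear map `dM`,
`(M, ρ, dM)` is a representation of `(A, br, d)` iff `(M, ρ, dM + (λ/2)·id)` is a
representation of the 3-Lie algebra with derivation `(A, br, d + (λ/2)·id)`. -/
theorem stmt3 {k A M : Type*} [Field k] [CharZero k] [AddCommGroup A] [Module k A]
    [AddCommGroup M] [Module k M]
    (br : A → A → A → A) (lam : k) (d : A →ₗ[k] A)
    (h3 : Is3LieBr k br) (hd : IsMDiffOn k br lam ⇑d)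
    (ρ : A → A → M →ₗ[k] M) (hρ : Is3LieRep k br ρ) (dM : M →ₗ[k] M) :
    IsMDiffRep k ρ lam ⇑d ⇑dM ↔
      ∀ (a b : A) (v : M),
        dM (ρ a b v) + (lam / 2) • ρ a b v =
          ρ (d a + (lam / 2) • a) b v + ρ a (d b + (lam / 2) • b) v +
            ρ a b (dM v + (lam / 2) • v) := by
  obtain ⟨h1, h2, -, -, -⟩ := hρ
  have key : ∀ (a b : A) (v : M),
      ρ (d a + (lam / 2) • a) b v + ρ a (d b + (lam / 2) • b) v +
        ρ a b (dM v + (lam / 2) • v) =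
      ρ (d a) b v + ρ a (d b) v + ρ a b (dM v) + lam • ρ a b v +
        (lam / 2) • ρ a b v := by
    intro a b v
    have ea : ρ (d a + (lam / 2) • a) b = ρ (d a) b + (lam / 2) • ρ a b := by
      rw [add_comm (d a), h1]; abel
    have eb : ρ a (d b + (lam / 2) • b) = ρ a (d b) + (lam / 2) • ρ a b := by
      rw [add_comm (d b), h2]; abel
    rw [ea, eb]
    simp only [LinearMap.add_apply, LinearMap.smul_apply, map_add, map_smul]
    have h2' : (lam / 2) • ρ a b v + (lam / 2) • ρ a b v = lam • ρ a b v := by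
      rw [← add_smul]; ring_nf
    rw [← h2']; abel
  constructor
  · intro H a b v
    rw [key, H]
  · intro H a b v
    have hv := H a b v
    rw [key] at hv
    exact add_right_cancel hv
end

section
/- Let (A,[-,-,-],d) be a modified λ-differential 3-Lie algebra, (M;ρ) a representation of the 3-Lie algebra (A,[-,-,-]), and d_M : M → M a linear map. Define on A⊕M the trilinear skew-symmetric bracket [a1+u1, a2+u2, a3+u3]_ρ = [a1,a2,a3] + ρ(a1,a2)u3 + ρ(a3,a1)u2 + ρ(a2,a3)u1 and the linear map (d⊕d_M)(a+u) = d(a) + d_M(u). Then (M;ρ,d_M) is a representation of the modified λ-differential 3-Lie algebra (A,[-,-,-],d) if and only if (A⊕M, [-,-,-]_ρ, d⊕d_M) is a modified λ-differential 3-Lie algebra. -/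
open Finset

/-- `(M, ρ, dM)` is a representation of the modified `λ`-differential
3-Lie algebra `(A, br, d)` iff the semidirect sum `A ⊕ M` with the bracket
`[a1+u1,a2+u2,a3+u3] = [a1,a2,a3] + ρ(a1,a2)u3 + ρ(a3,a1)u2 + ρ(a2,a3)u1` and the
operator `d ⊕ dM` is a modified `λ`-differential 3-Lie algebra. -/
theorem stmt4 {k A M : Type*} [Field k] [CharZero k] [AddCommGroup A] [Module k A]
    [AddCommGroup M] [Module k M]
    (br : A → A → A → A) (lam : k) (d : A →ₗ[k] A)
    (h3 : Is3LieBr k br) (hd : IsMDiffOn k br lam ⇑d)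
    (ρ : A → A → M →ₗ[k] M) (hρ : Is3LieRep k br ρ) (dM : M →ₗ[k] M) :
    IsMDiffRep k ρ lam ⇑d ⇑dM ↔
      (Is3LieBr k (fun x y z : A × M =>
          ((br x.1 y.1 z.1 : A),
            (ρ x.1 y.1 z.2 + ρ z.1 x.1 y.2 + ρ y.1 z.1 x.2 : M))) ∧
        IsMDiffOn k (fun x y z : A × M =>
          ((br x.1 y.1 z.1 : A),
            (ρ x.1 y.1 z.2 + ρ z.1 x.1 y.2 + ρ y.1 z.1 x.2 : M)))
          lam (fun x : A × M => ((d x.1 : A), (dM x.2 : M)))) := by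
  obtain ⟨⟨hb1, hb2, hb3, hb4, hb5⟩, hF⟩ := h3
  obtain ⟨hl1, hl2, hsk, hR1, hR2⟩ := hρ
  have hl1' : ∀ (t : k) (a a' b : A) (v : M),
      ρ (t • a + a') b v = t • ρ a b v + ρ a' b v := fun t a a' b v => by
    have := LinearMap.congr_fun (hl1 t a a' b) v; simpa using this
  have hl2' : ∀ (t : k) (a b b' : A) (v : M),
      ρ a (t • b + b') v = t • ρ a b v + ρ a b' v := fun t a b b' v => by
    have := LinearMap.congr_fun (hl2 t a b b') v; simpa using this
  have hsk' : ∀ (a b : A) (v : M), ρ a b v = -(ρ b a v) := fun a b v => by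
    rw [hsk a b]; simp
  have hR1' : ∀ (b1 b2 b3 b4 : A) (v : M), ρ (br b1 b2 b3) b4 v =
      ρ b2 b3 (ρ b1 b4 v) + ρ b3 b1 (ρ b2 b4 v) + ρ b1 b2 (ρ b3 b4 v) :=
    fun b1 b2 b3 b4 v => by
      have := LinearMap.congr_fun (hR1 b1 b2 b3 b4) v; simpa using this
  have hR2' : ∀ (b1 b2 b3 b4 : A) (v : M), ρ b1 b2 (ρ b3 b4 v) =
      ρ b3 b4 (ρ b1 b2 v) + ρ (br b1 b2 b3) b4 v + ρ b3 (br b1 b2 b4) v :=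
    fun b1 b2 b3 b4 v => by
      have := LinearMap.congr_fun (hR2 b1 b2 b3 b4) v; simpa using this
  constructor
  · intro hrep
    refine ⟨⟨⟨?_, ?_, ?_, ?_, ?_⟩, ?_⟩, ?_⟩
    · intro t x x' y z
      refine Prod.ext ?_ ?_ <;>
        simp only [Prod.fst_add, Prod.snd_add, Prod.smul_fst, Prod.smul_snd]
      · exact hb1 t x.1 x'.1 y.1 z.1
      · rw [hl1' t x.1 x'.1 y.1 z.2, hl2' t z.1 x.1 x'.1,
          map_add (ρ y.1 z.1), map_smul (ρ y.1 z.1)]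
        module
    · intro t x y y' z
      refine Prod.ext ?_ ?_ <;>
        simp only [Prod.fst_add, Prod.snd_add, Prod.smul_fst, Prod.smul_snd]
      · exact hb2 t x.1 y.1 y'.1 z.1
      · rw [hl2' t x.1 y.1 y'.1 z.2, hl1' t y.1 y'.1 z.1,
          map_add (ρ z.1 x.1), map_smul (ρ z.1 x.1)]
        module
    · intro t x y z z'
      refine Prod.ext ?_ ?_ <;>
        simp only [Prod.fst_add, Prod.snd_add, Prod.smul_fst, Prod.smul_snd]
      · exact hb3 t x.1 y.1 z.1 z'.1
      · rw [hl1' t z.1 z'.1 x.1 y.2, hl2' t y.1 z.1 z'.1 x.2,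
          map_add (ρ x.1 y.1), map_smul (ρ x.1 y.1)]
        module
    · intro x y z
      refine Prod.ext ?_ ?_ <;> simp only [Prod.fst_neg, Prod.snd_neg]
      · exact hb4 x.1 y.1 z.1
      · rw [hsk' x.1 y.1 z.2, hsk' z.1 x.1 y.2, hsk' y.1 z.1 x.2]
        abel
    · intro x y z
      refine Prod.ext ?_ ?_ <;> simp only [Prod.fst_neg, Prod.snd_neg]
      · exact hb5 x.1 y.1 z.1
      · rw [hsk' x.1 y.1 z.2, hsk' z.1 x.1 y.2, hsk' y.1 z.1 x.2]
        abel
    · intro x1 x2 x3 x4 x5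
      refine Prod.ext ?_ ?_ <;>
        simp only [Prod.fst_add, Prod.snd_add, map_add]
      · exact hF x1.1 x2.1 x3.1 x4.1 x5.1
      · rw [hR2' x1.1 x2.1 x3.1 x4.1 x5.2, hR2' x1.1 x2.1 x5.1 x3.1 x4.2,
          hR2' x1.1 x2.1 x4.1 x5.1 x3.2, hR1' x3.1 x4.1 x5.1 x1.1 x2.2]
        have h1 : ρ x2.1 (br x3.1 x4.1 x5.1) x1.2 =
            ρ x4.1 x5.1 (ρ x2.1 x3.1 x1.2) + ρ x5.1 x3.1 (ρ x2.1 x4.1 x1.2) +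
              ρ x3.1 x4.1 (ρ x2.1 x5.1 x1.2) := by
          rw [hsk' x2.1 (br x3.1 x4.1 x5.1) x1.2,
            hR1' x3.1 x4.1 x5.1 x2.1 x1.2,
            hsk' x3.1 x2.1 x1.2, hsk' x4.1 x2.1 x1.2, hsk' x5.1 x2.1 x1.2]
          simp only [map_neg]
          abel
        rw [h1]
        abel
    · intro x y z
      refine Prod.ext ?_ ?_ <;>
        simp only [Prod.fst_add, Prod.snd_add, Prod.smul_fst, Prod.smul_snd]
      · exact hd x.1 y.1 z.1
      · rw [map_add dM, map_add dM, hrep x.1 y.1 z.2, hrep z.1 x.1 y.2,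
          hrep y.1 z.1 x.2]
        rw [smul_add, smul_add]
        abel
  · rintro ⟨-, hmd⟩
    intro a b v
    have h := congrArg Prod.snd (hmd (a, 0) (b, 0) (0, v))
    simpa using h
end

section
/- Let (M;ρ,d_M) be a representation of a modified λ-differential 3-Lie algebra (A,[-,-,-],d), and let M* = Hom(M,k) be the dual space. Define ρ* : A×A → End(M*) by (ρ*(a1,a2)α)(v) = -α(ρ(a1,a2)v) and d_M* : M* → M* by (d_M* α)(v) = α(d_M(v)). Then (M*; ρ*, -d_M*) is a representation of the modified λ-differential 3-Lie algebra (A,[-,-,-],d). -/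
open Finset

/-- the dual of a representation of a modified `λ`-differential 3-Lie
algebra: if `(M, ρ, dM)` is a representation of `(A, br, d)`, then
`(M*, ρ*, -dM*)` is again a representation, where `(ρ*(a,b)α)(v) = -α(ρ(a,b)v)` and
`(dM* α)(v) = α(dM v)`. -/
theorem stmt5 {k A M : Type*} [Field k] [CharZero k] [AddCommGroup A] [Module k A]
    [AddCommGroup M] [Module k M]
    (br : A → A → A → A) (lam : k) (d : A →ₗ[k] A)
    (h3 : Is3LieBr k br) (hd : IsMDiffOn k br lam ⇑d)
    (ρ : A → A → M →ₗ[k] M) (hρ : Is3LieRep k br ρ) (dM : M →ₗ[k] M)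
    (hdM : IsMDiffRep k ρ lam ⇑d ⇑dM) :
    Is3LieRep k br (fun a b => -((ρ a b).dualMap)) ∧
      IsMDiffRep k (fun a b => -((ρ a b).dualMap)) lam ⇑d ⇑(-(dM.dualMap)) := by
  obtain ⟨h1, h2, hsk, h4, h5⟩ := hρ
  -- key: the anticommutator sum vanishes
  have hS : ∀ a1 a2 a3 a4 : A,
      ρ a1 a4 ∘ₗ ρ a2 a3 + ρ a2 a3 ∘ₗ ρ a1 a4 + ρ a2 a4 ∘ₗ ρ a3 a1 +
      ρ a3 a1 ∘ₗ ρ a2 a4 + ρ a3 a4 ∘ₗ ρ a1 a2 + ρ a1 a2 ∘ₗ ρ a3 a4 = 0 := by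
    intro a1 a2 a3 a4
    have e1 := h5 a1 a2 a3 a4
    have e2 := h5 a3 a4 a1 a2
    have hdag : ρ (br a1 a2 a3) a4 + ρ a3 (br a1 a2 a4) +
        ρ (br a3 a4 a1) a2 + ρ a1 (br a3 a4 a2) = 0 := by
      have e1' : ρ (br a1 a2 a3) a4 + ρ a3 (br a1 a2 a4) =
          ρ a1 a2 ∘ₗ ρ a3 a4 - ρ a3 a4 ∘ₗ ρ a1 a2 := by rw [e1]; abel
      have e2' : ρ (br a3 a4 a1) a2 + ρ a1 (br a3 a4 a2) =
          ρ a3 a4 ∘ₗ ρ a1 a2 - ρ a1 a2 ∘ₗ ρ a3 a4 := by rw [e2]; abel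
      calc ρ (br a1 a2 a3) a4 + ρ a3 (br a1 a2 a4) +
            ρ (br a3 a4 a1) a2 + ρ a1 (br a3 a4 a2)
          = (ρ (br a1 a2 a3) a4 + ρ a3 (br a1 a2 a4)) +
            (ρ (br a3 a4 a1) a2 + ρ a1 (br a3 a4 a2)) := by abel
        _ = 0 := by rw [e1', e2']; abel
    rw [hsk a3 (br a1 a2 a4), hsk a1 (br a3 a4 a2), h4 a1 a2 a3 a4,
      h4 a1 a2 a4 a3, h4 a3 a4 a1 a2, h4 a3 a4 a2 a1] at hdag
    rw [hsk a1 a3, hsk a4 a1, hsk a4 a3, hsk a3 a2, hsk a4 a2, hsk a2 a1] at hdag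
    simp only [LinearMap.neg_comp, LinearMap.comp_neg, neg_neg, neg_add_rev] at hdag
    set S := ρ a1 a4 ∘ₗ ρ a2 a3 + ρ a2 a3 ∘ₗ ρ a1 a4 + ρ a2 a4 ∘ₗ ρ a3 a1 +
      ρ a3 a1 ∘ₗ ρ a2 a4 + ρ a3 a4 ∘ₗ ρ a1 a2 + ρ a1 a2 ∘ₗ ρ a3 a4 with hSdef
    have h2S : S + S = 0 := by
      rw [hSdef, ← hdag]; abel
    have : (2 : k) • S = 0 := by rw [two_smul]; exact h2S
    calc S = (2:k)⁻¹ • ((2:k) • S) := by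
            rw [smul_smul, inv_mul_cancel₀ (two_ne_zero), one_smul]
      _ = 0 := by rw [this, smul_zero]
  refine ⟨⟨?_, ?_, ?_, ?_, ?_⟩, ?_⟩
  · intro t a a' b
    show -(ρ (t • a + a') b).dualMap = t • -(ρ a b).dualMap + -(ρ a' b).dualMap
    rw [h1]
    ext α v
    simp only [LinearMap.neg_apply, LinearMap.dualMap_apply, LinearMap.add_apply,
      LinearMap.smul_apply, map_add, map_smul, smul_eq_mul]
    ring
  · intro t a b b'
    show -(ρ a (t • b + b')).dualMap = t • -(ρ a b).dualMap + -(ρ a b').dualMap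
    rw [h2]
    ext α v
    simp only [LinearMap.neg_apply, LinearMap.dualMap_apply, LinearMap.add_apply,
      LinearMap.smul_apply, map_add, map_smul, smul_eq_mul]
    ring
  · intro a b
    show -(ρ a b).dualMap = -(-(ρ b a).dualMap)
    rw [hsk a b]
    ext α v
    simp
  · intro a1 a2 a3 a4
    ext α v
    have k1 := congrArg α (LinearMap.congr_fun (hS a1 a2 a3 a4) v)
    have k2 := congrArg α (LinearMap.congr_fun (h4 a1 a2 a3 a4) v)
    simp only [LinearMap.add_apply, LinearMap.comp_apply, LinearMap.zero_apply,
      map_add, map_zero] at k1 k2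
    simp only [LinearMap.neg_apply, LinearMap.dualMap_apply', LinearMap.add_apply,
      LinearMap.comp_apply, Function.comp_apply, LinearMap.coe_comp]
    linear_combination -k1 - k2
  · intro a1 a2 a3 a4
    ext α v
    have k1 := congrArg α (LinearMap.congr_fun (h5 a1 a2 a3 a4) v)
    simp only [LinearMap.add_apply, LinearMap.comp_apply, map_add] at k1
    simp only [LinearMap.neg_apply, LinearMap.dualMap_apply', LinearMap.add_apply,
      LinearMap.comp_apply, Function.comp_apply, LinearMap.coe_comp]
    linear_combination -k1
  · intro a b α
    refine LinearMap.ext fun v => ?_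
    have k1 := congrArg α (hdM a b v)
    simp only [map_add, map_smul, smul_eq_mul] at k1
    simp only [LinearMap.neg_apply, LinearMap.dualMap_apply', LinearMap.add_apply,
      LinearMap.smul_apply, LinearMap.coe_comp, Function.comp_apply, Pi.neg_apply,
      smul_eq_mul, smul_neg]
    linear_combination -k1
end

section
/- Let (M;ρ,d_M) be a representation of a modified λ-differential 3-Lie algebra (A,[-,-,-],d). For n ≥ 1 let C^n(A,M) denote the space of maps f((a1,b1),...,(a_{n-1},b_{n-1}),a_n) that are multilinear and skew-symmetric within each pair (a_i,b_i), and let δ : C^n(A,M) → C^{n+1}(A,M) be the 3-Lie algebra coboundary operator. Define Φ : C^n(A,M) → C^n(A,M) by (Φf)(A_1,...,A_{n-1},a_n) = Σ_{i=1}^{n-1} f(A_1,...,A_{i-1}, d(a_i)∧b_i + a_i∧d(b_i), A_{i+1},...,A_{n-1}, a_n) + f(A_1,...,A_{n-1}, d(a_n)) + (n-1)λ f(A_1,...,A_{n-1},a_n) - d_M(f(A_1,...,A_{n-1},a_n)), where A_i = a_i∧b_i. Then Φ is a cochain map: Φ∘δ = δ∘Φ. -/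
open Finset

section CochainDefs

variable (k : Type*) {A M : Type*} [Field k] [AddCommGroup A] [Module k A]
  [AddCommGroup M] [Module k M]

/-- An element of `C^{n+1}(A, M) = Hom((∧²A)^{⊗ n} ∧ A, M)`, encoded as a map in
`n` pairs of elements of `A` and one extra element of `A`, which is multilinear and
skew-symmetric within each pair. -/
def IsCochain (n : ℕ) (f : (Fin n → A × A) → A → M) : Prop :=
  (∀ (i : Fin n) (P : Fin n → A × A) (t : k) (x x' b : A) (a : A),
    f (Function.update P i (t • x + x', b)) a =
      t • f (Function.update P i (x, b)) a + f (Function.update P i (x', b)) a) ∧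
  (∀ (i : Fin n) (P : Fin n → A × A) (t : k) (x y y' : A) (a : A),
    f (Function.update P i (x, t • y + y')) a =
      t • f (Function.update P i (x, y)) a + f (Function.update P i (x, y')) a) ∧
  (∀ (i : Fin n) (P : Fin n → A × A) (a : A),
    f (Function.update P i ((P i).2, (P i).1)) a = - f P a) ∧
  (∀ (P : Fin n → A × A) (t : k) (a a' : A),
    f P (t • a + a') = t • f P a + f P a')

variable (br : A → A → A → A) (ρ : A → A → M →ₗ[k] M)

/-- The coboundary operator `δ : C^{n+1}(A,M) → C^{n+2}(A,M)` of the 3-Lie algebra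
`(A, br)` with coefficients in the representation `(M, ρ)`; here a cochain with `n`
pair-arguments `A_i = aᵢ ∧ bᵢ` and a final argument in `A` is an `(n+1)`-cochain. -/
def threeLieDelta (n : ℕ) (f : (Fin n → A × A) → A → M) :
    (Fin (n + 1) → A × A) → A → M := fun P a =>
  ((-1 : ℤ) ^ n) •
    (ρ (P (Fin.last n)).2 a (f (fun j => P j.castSucc) (P (Fin.last n)).1) +
      ρ a (P (Fin.last n)).1 (f (fun j => P j.castSucc) (P (Fin.last n)).2)) +
  (∑ i : Fin (n + 1), ((-1 : ℤ) ^ (i : ℕ)) •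
    ρ (P i).1 (P i).2 (f (fun j => P (i.succAbove j)) a)) +
  (∑ i : Fin (n + 1), ((-1 : ℤ) ^ ((i : ℕ) + 1)) •
    f (fun j => P (i.succAbove j)) (br (P i).1 (P i).2 a)) +
  (∑ i : Fin (n + 1), ∑ j : Fin (n + 1),
    if i < j then
      ((-1 : ℤ) ^ ((i : ℕ) + 1)) •
        (f (fun l => if i.succAbove l = j
              then (br (P i).1 (P i).2 (P j).1, (P j).2)
              else P (i.succAbove l)) a +
          f (fun l => if i.succAbove l = j
              then ((P j).1, br (P i).1 (P i).2 (P j).2)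
              else P (i.succAbove l)) a)
    else 0)

variable (lam : k) (d : A → A) (dM : M → M)

/-- The operator `Φ : C^{n+1}(A,M) → C^{n+1}(A,M)` induced by the modified
`λ`-differential structure `(d, dM)`; the cochain has `n` pair-arguments. -/
def mdPhi (n : ℕ) (f : (Fin n → A × A) → A → M) : (Fin n → A × A) → A → M :=
  fun P a =>
    (∑ i : Fin n,
      (f (Function.update P i (d (P i).1, (P i).2)) a +
        f (Function.update P i ((P i).1, d (P i).2)) a)) +
    f P (d a) + ((n : k) * lam) • f P a - dM (f P a)

end CochainDefs

namespace Stmt7Aux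

variable {k A M : Type*} [Field k] [AddCommGroup A] [Module k A]
  [AddCommGroup M] [Module k M] {n : ℕ} {f : (Fin n → A × A) → A → M}

theorem fadd (hf : IsCochain k n f) (P : Fin n → A × A) (x y : A) :
    f P (x + y) = f P x + f P y := by
  simpa using hf.2.2.2 P 1 x y

theorem fzero (hf : IsCochain k n f) (P : Fin n → A × A) : f P 0 = 0 := by
  have h := fadd hf P 0 0
  rw [add_zero] at h
  exact (left_eq_add.mp h)

theorem fsmul (hf : IsCochain k n f) (P : Fin n → A × A) (t : k) (x : A) :
    f P (t • x) = t • f P x := by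
  have h := hf.2.2.2 P t x 0
  rw [add_zero, fzero hf, add_zero] at h
  exact h

theorem fadd1 (hf : IsCochain k n f) (P : Fin n → A × A) (i : Fin n) (x y b : A) (a : A) :
    f (Function.update P i (x + y, b)) a =
      f (Function.update P i (x, b)) a + f (Function.update P i (y, b)) a := by
  simpa using hf.1 i P 1 x y b a

theorem fzero1 (hf : IsCochain k n f) (P : Fin n → A × A) (i : Fin n) (b : A) (a : A) :
    f (Function.update P i ((0 : A), b)) a = 0 := by
  have h := fadd1 hf P i 0 0 b a
  rw [add_zero] at h
  exact (left_eq_add.mp h)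

theorem fsmul1 (hf : IsCochain k n f) (P : Fin n → A × A) (i : Fin n) (t : k) (x b : A) (a : A) :
    f (Function.update P i (t • x, b)) a = t • f (Function.update P i (x, b)) a := by
  have h := hf.1 i P t x 0 b a
  rw [fzero1 hf, add_zero] at h
  simpa using h

theorem fadd2 (hf : IsCochain k n f) (P : Fin n → A × A) (i : Fin n) (x y b : A) (a : A) :
    f (Function.update P i (b, x + y)) a =
      f (Function.update P i (b, x)) a + f (Function.update P i (b, y)) a := by
  simpa using hf.2.1 i P 1 b x y a

theorem fzero2 (hf : IsCochain k n f) (P : Fin n → A × A) (i : Fin n) (b : A) (a : A) :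
    f (Function.update P i (b, (0 : A))) a = 0 := by
  have h := fadd2 hf P i 0 0 b a
  rw [add_zero] at h
  exact (left_eq_add.mp h)

theorem fsmul2 (hf : IsCochain k n f) (P : Fin n → A × A) (i : Fin n) (t : k) (x b : A) (a : A) :
    f (Function.update P i (b, t • x)) a = t • f (Function.update P i (b, x)) a := by
  have h := hf.2.1 i P t b x 0 a
  rw [fzero2 hf, add_zero] at h
  simpa using h

theorem comp_update_self (P : Fin (n + 1) → A × A) (i : Fin (n + 1)) (v : A × A) :
    (fun j : Fin n => Function.update P i v (i.succAbove j)) = fun j => P (i.succAbove j) := by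
  funext j
  exact Function.update_of_ne (Fin.succAbove_ne i j) v P

theorem comp_update_succAbove (P : Fin (n + 1) → A × A) (i : Fin (n + 1)) (l : Fin n)
    (v : A × A) :
    (fun j : Fin n => Function.update P (i.succAbove l) v (i.succAbove j)) =
      Function.update (fun j => P (i.succAbove j)) l v := by
  funext j
  rcases eq_or_ne j l with rfl | hj
  · simp
  · rw [Function.update_of_ne (Fin.succAbove_right_injective.ne hj) v P,
      Function.update_of_ne hj]

theorem ifTuple_eq (P : Fin (n + 1) → A × A) (i j : Fin (n + 1)) (l0 : Fin n)
    (hl0 : i.succAbove l0 = j) (v : A × A) :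
    (fun l => if i.succAbove l = j then v else P (i.succAbove l)) =
      Function.update (fun l => P (i.succAbove l)) l0 v := by
  funext l
  rcases eq_or_ne l l0 with rfl | hl
  · simp [hl0]
  · have h : i.succAbove l ≠ j := fun h =>
      hl (Fin.succAbove_right_injective (h.trans hl0.symm))
    rw [if_neg h, Function.update_of_ne hl]

end Stmt7Aux
namespace Stmt7Aux

section Struct
variable {k A M : Type*} [Field k] [AddCommGroup A] [Module k A]
  [AddCommGroup M] [Module k M]
  (lam : k) (d : A →ₗ[k] A) (dM : M →ₗ[k] M)

theorem mdPhi_zero (m : ℕ) :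
    mdPhi k lam (⇑d) (⇑dM) m (fun _ _ => (0 : M)) = fun _ _ => 0 := by
  funext P a
  simp [mdPhi]

theorem mdPhi_add (m : ℕ) (g1 g2 : (Fin m → A × A) → A → M) :
    mdPhi k lam (⇑d) (⇑dM) m (fun P a => g1 P a + g2 P a) =
      fun P a => mdPhi k lam (⇑d) (⇑dM) m g1 P a + mdPhi k lam (⇑d) (⇑dM) m g2 P a := by
  funext P a
  simp only [mdPhi, smul_add, map_add, Finset.sum_add_distrib]
  abel

theorem mdPhi_zsmul (m : ℕ) (c : ℤ) (g : (Fin m → A × A) → A → M) :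
    mdPhi k lam (⇑d) (⇑dM) m (fun P a => c • g P a) =
      fun P a => c • mdPhi k lam (⇑d) (⇑dM) m g P a := by
  funext P a
  simp only [mdPhi, map_zsmul, smul_add, smul_sub, Finset.smul_sum,
    smul_comm ((m : k) * lam) c]

theorem mdPhi_sum (m : ℕ) {ι : Type*} (s : Finset ι) (g : ι → (Fin m → A × A) → A → M) :
    mdPhi k lam (⇑d) (⇑dM) m (fun P a => ∑ i ∈ s, g i P a) =
      fun P a => ∑ i ∈ s, mdPhi k lam (⇑d) (⇑dM) m (g i) P a := by
  classical
  induction s using Finset.induction_on with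
  | empty => simpa using mdPhi_zero lam d dM m
  | @insert x s hx ih =>
    rw [show (fun P a => ∑ i ∈ insert x s, g i P a) =
        fun P a => g x P a + ∑ i ∈ s, g i P a by
      funext P a; rw [Finset.sum_insert hx]]
    rw [mdPhi_add, ih]
    funext P a
    rw [Finset.sum_insert hx]

end Struct
end Stmt7Aux
namespace Stmt7Aux
section Keys
variable {k A M : Type*} [Field k] [AddCommGroup A] [Module k A]
  [AddCommGroup M] [Module k M]
  {br : A → A → A → A} {ρ : A → A → M →ₗ[k] M} {lam : k} {d : A →ₗ[k] A} {dM : M →ₗ[k] M}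
  {n : ℕ} {f : (Fin n → A × A) → A → M}

theorem key1 (hdM : IsMDiffRep k ρ lam ⇑d ⇑dM) (i : Fin (n + 1)) :
    mdPhi k lam ⇑d ⇑dM (n + 1)
      (fun P a => ρ (P i).1 (P i).2 (f (fun j => P (i.succAbove j)) a)) =
    fun P a => ρ (P i).1 (P i).2 (mdPhi k lam ⇑d ⇑dM n f (fun j => P (i.succAbove j)) a) := by
  funext P a
  have hupd : ∀ (l : Fin n) (v : A × A), Function.update P (i.succAbove l) v i = P i :=
    fun l v => Function.update_of_ne (Fin.succAbove_ne i l).symm v P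
  simp only [mdPhi]
  rw [Fin.sum_univ_succAbove _ i]
  simp only [Function.update_self, hupd, comp_update_self, comp_update_succAbove]
  rw [hdM (P i).1 (P i).2]
  simp only [map_add, map_sub, map_smul, map_sum, Nat.cast_succ, Nat.cast_add, Nat.cast_one,
    add_mul, one_mul, add_smul]
  abel

end Keys
end Stmt7Aux
namespace Stmt7Aux
section Keys2
variable {k A M : Type*} [Field k] [AddCommGroup A] [Module k A]
  [AddCommGroup M] [Module k M]
  {br : A → A → A → A} {ρ : A → A → M →ₗ[k] M} {lam : k} {d : A →ₗ[k] A} {dM : M →ₗ[k] M}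
  {n : ℕ} {f : (Fin n → A × A) → A → M}

theorem key2 (hd : IsMDiffOn k br lam ⇑d) (hf : IsCochain k n f) (i : Fin (n + 1)) :
    mdPhi k lam ⇑d ⇑dM (n + 1)
      (fun P a => f (fun j => P (i.succAbove j)) (br (P i).1 (P i).2 a)) =
    fun P a => mdPhi k lam ⇑d ⇑dM n f (fun j => P (i.succAbove j)) (br (P i).1 (P i).2 a) := by
  funext P a
  have hupd : ∀ (l : Fin n) (v : A × A), Function.update P (i.succAbove l) v i = P i :=
    fun l v => Function.update_of_ne (Fin.succAbove_ne i l).symm v P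
  simp only [mdPhi]
  rw [Fin.sum_univ_succAbove _ i]
  simp only [Function.update_self, hupd, comp_update_self, comp_update_succAbove]
  rw [hd (P i).1 (P i).2 a, fadd hf, fadd hf, fadd hf, fsmul hf]
  simp only [Nat.cast_succ, Nat.cast_add, Nat.cast_one, add_mul, one_mul, add_smul]
  abel

theorem key0a (hdM : IsMDiffRep k ρ lam ⇑d ⇑dM) :
    mdPhi k lam ⇑d ⇑dM (n + 1)
      (fun P a => ρ (P (Fin.last n)).2 a (f (fun j => P j.castSucc) (P (Fin.last n)).1)) =
    fun P a => ρ (P (Fin.last n)).2 a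
      (mdPhi k lam ⇑d ⇑dM n f (fun j => P j.castSucc) (P (Fin.last n)).1) := by
  funext P a
  simp only [← Fin.succAbove_last]
  have hupd : ∀ (l : Fin n) (v : A × A),
      Function.update P ((Fin.last n).succAbove l) v (Fin.last n) = P (Fin.last n) :=
    fun l v => Function.update_of_ne (Fin.succAbove_ne (Fin.last n) l).symm v P
  simp only [mdPhi]
  rw [Fin.sum_univ_succAbove _ (Fin.last n)]
  simp only [Function.update_self, hupd, comp_update_self, comp_update_succAbove]
  rw [hdM (P (Fin.last n)).2 a]
  simp only [map_add, map_sub, map_smul, map_sum, Nat.cast_succ, Nat.cast_add, Nat.cast_one,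
    add_mul, one_mul, add_smul]
  abel

theorem key0b (hdM : IsMDiffRep k ρ lam ⇑d ⇑dM) :
    mdPhi k lam ⇑d ⇑dM (n + 1)
      (fun P a => ρ a (P (Fin.last n)).1 (f (fun j => P j.castSucc) (P (Fin.last n)).2)) =
    fun P a => ρ a (P (Fin.last n)).1
      (mdPhi k lam ⇑d ⇑dM n f (fun j => P j.castSucc) (P (Fin.last n)).2) := by
  funext P a
  simp only [← Fin.succAbove_last]
  have hupd : ∀ (l : Fin n) (v : A × A),
      Function.update P ((Fin.last n).succAbove l) v (Fin.last n) = P (Fin.last n) :=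
    fun l v => Function.update_of_ne (Fin.succAbove_ne (Fin.last n) l).symm v P
  simp only [mdPhi]
  rw [Fin.sum_univ_succAbove _ (Fin.last n)]
  simp only [Function.update_self, hupd, comp_update_self, comp_update_succAbove]
  rw [hdM a (P (Fin.last n)).1]
  simp only [map_add, map_sub, map_smul, map_sum, Nat.cast_succ, Nat.cast_add, Nat.cast_one,
    add_mul, one_mul, add_smul]
  abel

end Keys2
end Stmt7Aux
namespace Stmt7Aux
section Keys3
variable {k A M : Type*} [Field k] [AddCommGroup A] [Module k A]
  [AddCommGroup M] [Module k M]
  {br : A → A → A → A} {ρ : A → A → M →ₗ[k] M} {lam : k} {d : A →ₗ[k] A} {dM : M →ₗ[k] M}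

theorem key3a {n : ℕ} {f : (Fin n → A × A) → A → M}
    (hd : IsMDiffOn k br lam ⇑d) (hf : IsCochain k n f) {i j : Fin (n + 1)} (hij : i ≠ j) :
    mdPhi k lam ⇑d ⇑dM (n + 1)
      (fun P a => f (fun l => if i.succAbove l = j
          then (br (P i).1 (P i).2 (P j).1, (P j).2)
          else P (i.succAbove l)) a) =
    fun P a => mdPhi k lam ⇑d ⇑dM n f
      (fun l => if i.succAbove l = j
          then (br (P i).1 (P i).2 (P j).1, (P j).2)
          else P (i.succAbove l)) a := by
  cases n with
  | zero => exact absurd (Fin.ext (by omega)) hij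
  | succ m =>
    obtain ⟨l0, hl0⟩ := Fin.exists_succAbove_eq hij.symm
    funext P a
    have hT : ∀ (R : Fin (m + 1 + 1) → A × A) (v : A × A),
        (fun l => if i.succAbove l = j then v else R (i.succAbove l)) =
          Function.update (fun l => R (i.succAbove l)) l0 v :=
      fun R v => ifTuple_eq R i j l0 hl0 v
    have hupdi : ∀ (l : Fin (m + 1)) (v : A × A),
        Function.update P (i.succAbove l) v i = P i :=
      fun l v => Function.update_of_ne (Fin.succAbove_ne i l).symm v P
    have hupdj : ∀ (l' : Fin m) (v : A × A),
        Function.update P (i.succAbove (l0.succAbove l')) v j = P j := by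
      intro l' v
      have h : j ≠ i.succAbove (l0.succAbove l') := by
        rw [← hl0]
        exact (Fin.succAbove_right_injective.ne (Fin.succAbove_ne l0 l')).symm
      exact Function.update_of_ne h v P
    have hQ : ∀ (l' : Fin m) (v : A × A),
        Function.update (fun l => P (i.succAbove l)) l0 v (l0.succAbove l') =
          P (i.succAbove (l0.succAbove l')) :=
      fun l' v => Function.update_of_ne (Fin.succAbove_ne l0 l') v (fun l => P (i.succAbove l))
    have hcomm : ∀ (l' : Fin m) (v w : A × A),
        Function.update (Function.update (fun l => P (i.succAbove l)) l0 v)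
            (l0.succAbove l') w =
          Function.update (Function.update (fun l => P (i.succAbove l))
            (l0.succAbove l') w) l0 v :=
      fun l' v w => Function.update_comm (Fin.succAbove_ne l0 l').symm v w (fun l => P (i.succAbove l))
    simp only [hT, mdPhi]
    rw [Fin.sum_univ_succAbove _ i]
    simp only [Function.update_self, hupdi, Function.update_of_ne hij.symm,
      comp_update_self, comp_update_succAbove]
    have hite : ∀ (l' : Fin m) (v : A × A),
        (if i.succAbove (l0.succAbove l') = j then v
          else P (i.succAbove (l0.succAbove l'))) =
          P (i.succAbove (l0.succAbove l')) := by
      intro l' v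
      refine if_neg ?_
      rw [← hl0]
      exact Fin.succAbove_right_injective.ne (Fin.succAbove_ne l0 l')
    rw [Fin.sum_univ_succAbove _ l0, Fin.sum_univ_succAbove _ l0, hl0]
    simp only [eq_self_iff_true, if_true, hite, Function.update_self, Function.update_idem,
      hupdj, hQ, hcomm]
    rw [hd (P i).1 (P i).2 (P j).1]
    simp only [fadd1 hf, fsmul1 hf]
    simp only [Nat.cast_succ, Nat.cast_add, Nat.cast_one, add_mul, one_mul, add_smul]
    abel

theorem key3b {n : ℕ} {f : (Fin n → A × A) → A → M}
    (hd : IsMDiffOn k br lam ⇑d) (hf : IsCochain k n f) {i j : Fin (n + 1)} (hij : i ≠ j) :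
    mdPhi k lam ⇑d ⇑dM (n + 1)
      (fun P a => f (fun l => if i.succAbove l = j
          then ((P j).1, br (P i).1 (P i).2 (P j).2)
          else P (i.succAbove l)) a) =
    fun P a => mdPhi k lam ⇑d ⇑dM n f
      (fun l => if i.succAbove l = j
          then ((P j).1, br (P i).1 (P i).2 (P j).2)
          else P (i.succAbove l)) a := by
  cases n with
  | zero => exact absurd (Fin.ext (by omega)) hij
  | succ m =>
    obtain ⟨l0, hl0⟩ := Fin.exists_succAbove_eq hij.symm
    funext P a
    have hT : ∀ (R : Fin (m + 1 + 1) → A × A) (v : A × A),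
        (fun l => if i.succAbove l = j then v else R (i.succAbove l)) =
          Function.update (fun l => R (i.succAbove l)) l0 v :=
      fun R v => ifTuple_eq R i j l0 hl0 v
    have hupdi : ∀ (l : Fin (m + 1)) (v : A × A),
        Function.update P (i.succAbove l) v i = P i :=
      fun l v => Function.update_of_ne (Fin.succAbove_ne i l).symm v P
    have hupdj : ∀ (l' : Fin m) (v : A × A),
        Function.update P (i.succAbove (l0.succAbove l')) v j = P j := by
      intro l' v
      have h : j ≠ i.succAbove (l0.succAbove l') := by
        rw [← hl0]
        exact (Fin.succAbove_right_injective.ne (Fin.succAbove_ne l0 l')).symm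
      exact Function.update_of_ne h v P
    have hQ : ∀ (l' : Fin m) (v : A × A),
        Function.update (fun l => P (i.succAbove l)) l0 v (l0.succAbove l') =
          P (i.succAbove (l0.succAbove l')) :=
      fun l' v => Function.update_of_ne (Fin.succAbove_ne l0 l') v (fun l => P (i.succAbove l))
    have hcomm : ∀ (l' : Fin m) (v w : A × A),
        Function.update (Function.update (fun l => P (i.succAbove l)) l0 v)
            (l0.succAbove l') w =
          Function.update (Function.update (fun l => P (i.succAbove l))
            (l0.succAbove l') w) l0 v :=
      fun l' v w => Function.update_comm (Fin.succAbove_ne l0 l').symm v w (fun l => P (i.succAbove l))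
    simp only [hT, mdPhi]
    rw [Fin.sum_univ_succAbove _ i]
    simp only [Function.update_self, hupdi, Function.update_of_ne hij.symm,
      comp_update_self, comp_update_succAbove]
    have hite : ∀ (l' : Fin m) (v : A × A),
        (if i.succAbove (l0.succAbove l') = j then v
          else P (i.succAbove (l0.succAbove l'))) =
          P (i.succAbove (l0.succAbove l')) := by
      intro l' v
      refine if_neg ?_
      rw [← hl0]
      exact Fin.succAbove_right_injective.ne (Fin.succAbove_ne l0 l')
    rw [Fin.sum_univ_succAbove _ l0, Fin.sum_univ_succAbove _ l0, hl0]
    simp only [eq_self_iff_true, if_true, hite, Function.update_self, Function.update_idem,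
      hupdj, hQ, hcomm]
    rw [hd (P i).1 (P i).2 (P j).2]
    simp only [fadd2 hf, fsmul2 hf]
    simp only [Nat.cast_succ, Nat.cast_add, Nat.cast_one, add_mul, one_mul, add_smul]
    abel

end Keys3
end Stmt7Aux
namespace Stmt7Aux
section KeysIte
variable {k A M : Type*} [Field k] [AddCommGroup A] [Module k A]
  [AddCommGroup M] [Module k M]
  {br : A → A → A → A} {ρ : A → A → M →ₗ[k] M} {lam : k} {d : A →ₗ[k] A} {dM : M →ₗ[k] M}

theorem key3ite {n : ℕ} {f : (Fin n → A × A) → A → M}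
    (hd : IsMDiffOn k br lam ⇑d) (hf : IsCochain k n f) (i j : Fin (n + 1)) :
    mdPhi k lam ⇑d ⇑dM (n + 1)
      (fun P a => if i < j then ((-1 : ℤ) ^ ((i : ℕ) + 1)) •
          (f (fun l => if i.succAbove l = j
              then (br (P i).1 (P i).2 (P j).1, (P j).2)
              else P (i.succAbove l)) a +
            f (fun l => if i.succAbove l = j
              then ((P j).1, br (P i).1 (P i).2 (P j).2)
              else P (i.succAbove l)) a)
        else 0) =
    fun P a => if i < j then ((-1 : ℤ) ^ ((i : ℕ) + 1)) •
          (mdPhi k lam ⇑d ⇑dM n f (fun l => if i.succAbove l = j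
              then (br (P i).1 (P i).2 (P j).1, (P j).2)
              else P (i.succAbove l)) a +
            mdPhi k lam ⇑d ⇑dM n f (fun l => if i.succAbove l = j
              then ((P j).1, br (P i).1 (P i).2 (P j).2)
              else P (i.succAbove l)) a)
        else 0 := by
  rcases lt_or_ge i j with h | h
  · simp only [h, if_true]
    rw [mdPhi_zsmul, mdPhi_add, key3a hd hf h.ne, key3b hd hf h.ne]
  · have h' : ¬ i < j := not_lt.mpr h
    simp only [h', if_false]
    exact mdPhi_zero lam d dM _

end KeysIte
end Stmt7Aux

open Stmt7Aux in
/-- for a representation `(M, ρ, dM)` of a modified `λ`-differential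
3-Lie algebra `(A, br, d)`, the operator `Φ` is a cochain map: `Φ ∘ δ = δ ∘ Φ`. -/
theorem stmt7 {k A M : Type*} [Field k] [CharZero k] [AddCommGroup A] [Module k A]
    [AddCommGroup M] [Module k M]
    (br : A → A → A → A) (lam : k) (d : A →ₗ[k] A)
    (h3 : Is3LieBr k br) (hd : IsMDiffOn k br lam ⇑d)
    (ρ : A → A → M →ₗ[k] M) (hρ : Is3LieRep k br ρ) (dM : M →ₗ[k] M)
    (hdM : IsMDiffRep k ρ lam ⇑d ⇑dM)
    (n : ℕ) (f : (Fin n → A × A) → A → M) (hf : IsCochain k n f) :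
    mdPhi k lam ⇑d ⇑dM (n + 1) (threeLieDelta k br ρ n f) =
      threeLieDelta k br ρ n (mdPhi k lam ⇑d ⇑dM n f) := by
  rw [show threeLieDelta k br ρ n f = fun P a =>
    ((-1 : ℤ) ^ n) •
      (ρ (P (Fin.last n)).2 a (f (fun j => P j.castSucc) (P (Fin.last n)).1) +
        ρ a (P (Fin.last n)).1 (f (fun j => P j.castSucc) (P (Fin.last n)).2)) +
    (∑ i : Fin (n + 1), ((-1 : ℤ) ^ (i : ℕ)) •
      ρ (P i).1 (P i).2 (f (fun j => P (i.succAbove j)) a)) +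
    (∑ i : Fin (n + 1), ((-1 : ℤ) ^ ((i : ℕ) + 1)) •
      f (fun j => P (i.succAbove j)) (br (P i).1 (P i).2 a)) +
    (∑ i : Fin (n + 1), ∑ j : Fin (n + 1),
      if i < j then
        ((-1 : ℤ) ^ ((i : ℕ) + 1)) •
          (f (fun l => if i.succAbove l = j
                then (br (P i).1 (P i).2 (P j).1, (P j).2)
                else P (i.succAbove l)) a +
            f (fun l => if i.succAbove l = j
                then ((P j).1, br (P i).1 (P i).2 (P j).2)
                else P (i.succAbove l)) a)
      else 0) from rfl]
  simp only [mdPhi_add, mdPhi_zsmul, mdPhi_sum, key0a hdM, key0b hdM, key1 hdM,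
    key2 hd hf, key3ite hd hf]
  rfl
end

section
/- Let (M;ρ,d_M) be a representation of a modified λ-differential 3-Lie algebra (A,[-,-,-],d). Define the cochain spaces C^n_{md} = C^n(A,M) ⊕ C^{n-1}(A,M) for n ≥ 2 and C^1_{md} = Hom(A,M), and the map ∂ by ∂(f) = (δf, -Φf) for f ∈ C^1_{md} and ∂(f,g) = (δf, δg + (-1)^n Φf) for (f,g) ∈ C^n_{md}. Then ∂ is a coboundary operator: ∂∘∂ = 0. -/
open Finset

section MDAux

variable {k : Type*} {A M : Type*} [Field k] [AddCommGroup A] [Module k A]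
  [AddCommGroup M] [Module k M]

/-- slot-insertion operator -/
def Eop (n : ℕ) (σ : A → A) (f : (Fin n → A × A) → A → M) : (Fin n → A × A) → A → M :=
  fun P a => ∑ i, (f (Function.update P i (σ (P i).1, (P i).2)) a
    + f (Function.update P i ((P i).1, σ (P i).2)) a)

variable (k) in
/-- Lie-derivative type operator -/
def Lop (br : A → A → A → A) (ρ : A → A → M →ₗ[k] M) (x y : A) (n : ℕ)
    (f : (Fin n → A × A) → A → M) : (Fin n → A × A) → A → M :=
  fun P a => ρ x y (f P a) - Eop n (br x y) f P a - f P (br x y a)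

/-- insertion of a fixed first pair -/
def iop (n : ℕ) (X : A × A) (f : (Fin (n + 1) → A × A) → A → M) :
    (Fin n → A × A) → A → M :=
  fun P a => f (Fin.cons X P) a

variable (k) in
def ch1 (ρ : A → A → M →ₗ[k] M) (n : ℕ) (f : (Fin n → A × A) → A → M)
    (P : Fin (n + 1) → A × A) (a : A) : M :=
  ((-1 : ℤ) ^ n) •
    (ρ (P (Fin.last n)).2 a (f (fun j => P j.castSucc) (P (Fin.last n)).1) +
      ρ a (P (Fin.last n)).1 (f (fun j => P j.castSucc) (P (Fin.last n)).2))

variable (k) in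
def ch2 (ρ : A → A → M →ₗ[k] M) (n : ℕ) (f : (Fin n → A × A) → A → M)
    (P : Fin (n + 1) → A × A) (a : A) : M :=
  ∑ i : Fin (n + 1), ((-1 : ℤ) ^ (i : ℕ)) •
    ρ (P i).1 (P i).2 (f (fun j => P (i.succAbove j)) a)

def ch3 (br : A → A → A → A) (n : ℕ) (f : (Fin n → A × A) → A → M)
    (P : Fin (n + 1) → A × A) (a : A) : M :=
  ∑ i : Fin (n + 1), ((-1 : ℤ) ^ ((i : ℕ) + 1)) •
    f (fun j => P (i.succAbove j)) (br (P i).1 (P i).2 a)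

def ch4 (br : A → A → A → A) (n : ℕ) (f : (Fin n → A × A) → A → M)
    (P : Fin (n + 1) → A × A) (a : A) : M :=
  ∑ i : Fin (n + 1), ∑ j : Fin (n + 1),
    if i < j then
      ((-1 : ℤ) ^ ((i : ℕ) + 1)) •
        (f (fun l => if i.succAbove l = j
              then (br (P i).1 (P i).2 (P j).1, (P j).2)
              else P (i.succAbove l)) a +
          f (fun l => if i.succAbove l = j
              then ((P j).1, br (P i).1 (P i).2 (P j).2)
              else P (i.succAbove l)) a)
    else 0

variable (br : A → A → A → A) (ρ : A → A → M →ₗ[k] M)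

lemma delta_eq_chunks (n : ℕ) (f : (Fin n → A × A) → A → M) (P : Fin (n + 1) → A × A) (a : A) :
    threeLieDelta k br ρ n f P a =
      ch1 k ρ n f P a + ch2 k ρ n f P a + ch3 br n f P a + ch4 br n f P a := rfl

lemma negpow (n : ℕ) (m : M) : ((-1 : ℤ) ^ (n + 1)) • m = -(((-1 : ℤ) ^ n) • m) := by
  rw [pow_succ, mul_neg_one, neg_smul]

lemma ite_neg_zero (c : Prop) [Decidable c] (u : M) : (if c then -u else 0) = - (if c then u else 0) := by
  split <;> simp

lemma update_cons_succ {X : A × A} {P : Fin n → A × A} (i : Fin n) (v : A × A) :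
    Function.update (Fin.cons X P : Fin (n + 1) → A × A) i.succ v
      = Fin.cons X (Function.update P i v) := by
  ext l : 1
  refine Fin.cases ?_ (fun j => ?_) l
  · rw [Function.update_of_ne (Fin.succ_ne_zero i).symm, Fin.cons_zero, Fin.cons_zero]
  · rw [Fin.cons_succ, Function.update_apply, Function.update_apply, Fin.cons_succ]
    simp [Fin.succ_inj]

lemma res_castSucc {n : ℕ} (X : A × A) (P : Fin (n + 1) → A × A) :
    (fun j : Fin (n + 1) => (Fin.cons X P : Fin (n+2) → A × A) j.castSucc)
      = Fin.cons X (fun j : Fin n => P j.castSucc) := by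
  funext j
  refine Fin.cases ?_ (fun j' => ?_) j
  · rw [Fin.castSucc_zero, Fin.cons_zero, Fin.cons_zero]
  · rw [← Fin.succ_castSucc, Fin.cons_succ, Fin.cons_succ]

lemma res_zero {n : ℕ} (X : A × A) (P : Fin (n + 1) → A × A) :
    (fun j : Fin (n + 1) => (Fin.cons X P : Fin (n+2) → A × A) ((0 : Fin (n+2)).succAbove j)) = P := by
  funext j
  rw [Fin.succAbove_zero, Fin.cons_succ]

lemma res_succ {n : ℕ} (X : A × A) (P : Fin (n + 1) → A × A) (i : Fin (n + 1)) :
    (fun j : Fin (n + 1) => (Fin.cons X P : Fin (n+2) → A × A) (i.succ.succAbove j))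
      = Fin.cons X (fun j : Fin n => P (i.succAbove j)) := by
  funext j
  refine Fin.cases ?_ (fun j' => ?_) j
  · rw [Fin.succ_succAbove_zero, Fin.cons_zero, Fin.cons_zero]
  · rw [Fin.succ_succAbove_succ, Fin.cons_succ, Fin.cons_succ]

lemma if_update {n : ℕ} (X : A × A) (P : Fin (n + 1) → A × A) (j' : Fin (n + 1)) (v : A × A) :
    (fun l : Fin (n + 1) => if (0 : Fin (n+2)).succAbove l = j'.succ then v
        else (Fin.cons X P : Fin (n+2) → A × A) ((0 : Fin (n+2)).succAbove l))
      = Function.update P j' v := by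
  funext l
  rw [Fin.succAbove_zero, Fin.cons_succ, Function.update_apply]
  simp [Fin.succ_inj]

lemma if_cons {n : ℕ} (X : A × A) (P : Fin (n + 1) → A × A) (i' j' : Fin (n + 1)) (v : A × A) :
    (fun l : Fin (n + 1) => if (i'.succ).succAbove l = j'.succ then v
        else (Fin.cons X P : Fin (n+2) → A × A) ((i'.succ).succAbove l))
      = Fin.cons X (fun l : Fin n => if i'.succAbove l = j' then v else P (i'.succAbove l)) := by
  funext l
  refine Fin.cases ?_ (fun l' => ?_) l
  · rw [Fin.succ_succAbove_zero, Fin.cons_zero]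
    simp [(Fin.succ_ne_zero j').symm]
  · rw [Fin.succ_succAbove_succ, Fin.cons_succ, Fin.cons_succ]
    simp [Fin.succ_inj]

end MDAux
section MDCartan
set_option linter.unusedSectionVars false

variable {k : Type*} {A M : Type*} [Field k] [AddCommGroup A] [Module k A]
  [AddCommGroup M] [Module k M]
variable (br : A → A → A → A) (ρ : A → A → M →ₗ[k] M)

lemma cart1 (n : ℕ) (f : (Fin (n + 1) → A × A) → A → M) (X : A × A)
    (P : Fin (n + 1) → A × A) (a : A) :
    ch1 k ρ (n + 1) f (Fin.cons X P) a = - ch1 k ρ n (iop n X f) P a := by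
  unfold ch1 iop
  rw [← Fin.succ_last, Fin.cons_succ, res_castSucc, negpow]

lemma cart2 (n : ℕ) (f : (Fin (n + 1) → A × A) → A → M) (X : A × A)
    (P : Fin (n + 1) → A × A) (a : A) :
    ch2 k ρ (n + 1) f (Fin.cons X P) a
      = ρ X.1 X.2 (f P a) - ch2 k ρ n (iop n X f) P a := by
  unfold ch2 iop
  rw [Fin.sum_univ_succ]
  rw [show ∀ z : M, ρ X.1 X.2 (f P a) - z = ρ X.1 X.2 (f P a) + -z from fun z => sub_eq_add_neg _ _]
  congr 1
  · rw [Fin.cons_zero, res_zero]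
    simp
  · rw [← Finset.sum_neg_distrib]
    refine Finset.sum_congr rfl (fun i _ => ?_)
    rw [Fin.cons_succ, res_succ, Fin.val_succ, negpow]

lemma cart3 (n : ℕ) (f : (Fin (n + 1) → A × A) → A → M) (X : A × A)
    (P : Fin (n + 1) → A × A) (a : A) :
    ch3 br (n + 1) f (Fin.cons X P) a
      = - f P (br X.1 X.2 a) - ch3 br n (iop n X f) P a := by
  unfold ch3 iop
  rw [Fin.sum_univ_succ]
  rw [show ∀ z : M, - f P (br X.1 X.2 a) - z = - f P (br X.1 X.2 a) + -z from
    fun z => sub_eq_add_neg _ _]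
  congr 1
  · rw [Fin.cons_zero, res_zero]
    simp
  · rw [← Finset.sum_neg_distrib]
    refine Finset.sum_congr rfl (fun i _ => ?_)
    rw [Fin.cons_succ, res_succ, Fin.val_succ, negpow]

lemma cart4 (n : ℕ) (f : (Fin (n + 1) → A × A) → A → M) (X : A × A)
    (P : Fin (n + 1) → A × A) (a : A) :
    ch4 br (n + 1) f (Fin.cons X P) a
      = - Eop (n + 1) (br X.1 X.2) f P a - ch4 br n (iop n X f) P a := by
  unfold ch4 iop Eop
  rw [Fin.sum_univ_succ]
  rw [show ∀ z : M, - (∑ i : Fin (n+1), (f (Function.update P i (br X.1 X.2 (P i).1, (P i).2)) a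
        + f (Function.update P i ((P i).1, br X.1 X.2 (P i).2)) a)) - z
      = - (∑ i : Fin (n+1), (f (Function.update P i (br X.1 X.2 (P i).1, (P i).2)) a
        + f (Function.update P i ((P i).1, br X.1 X.2 (P i).2)) a)) + -z from
    fun z => sub_eq_add_neg _ _]
  congr 1
  · -- i = 0 part
    rw [← Finset.sum_neg_distrib, Fin.sum_univ_succ]
    rw [if_neg (lt_irrefl (0 : Fin (n+2)))]
    rw [zero_add]
    refine Finset.sum_congr rfl (fun j _ => ?_)
    rw [if_pos (Fin.succ_pos j), Fin.cons_zero, Fin.cons_succ, if_update, if_update]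
    simp only [Fin.val_zero, zero_add, pow_one, neg_smul, one_smul, neg_add_rev]
    try abel
  · -- i ≥ 1 part
    rw [← Finset.sum_neg_distrib]
    refine Finset.sum_congr rfl (fun i _ => ?_)
    rw [← Finset.sum_neg_distrib, Fin.sum_univ_succ]
    rw [if_neg (Fin.not_lt_zero i.succ)]
    rw [zero_add]
    refine Finset.sum_congr rfl (fun j _ => ?_)
    rw [if_cons, if_cons, Fin.cons_succ, Fin.cons_succ, Fin.val_succ]
    by_cases h : i < j
    · rw [if_pos (by exact_mod_cast Fin.succ_lt_succ_iff.mpr h), if_pos h, negpow]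
    · rw [if_neg (by simpa [Fin.succ_lt_succ_iff] using h), if_neg h, neg_zero]

lemma cartan (n : ℕ) (f : (Fin (n + 1) → A × A) → A → M) (X : A × A)
    (P : Fin (n + 1) → A × A) (a : A) :
    threeLieDelta k br ρ (n + 1) f (Fin.cons X P) a
      + threeLieDelta k br ρ n (iop n X f) P a
      = Lop k br ρ X.1 X.2 (n + 1) f P a := by
  rw [delta_eq_chunks, delta_eq_chunks, cart1, cart2, cart3, cart4, Lop]
  abel

end MDCartan
section MDOps
set_option linter.unusedSectionVars false

variable {k : Type*} {A M : Type*} [Field k] [AddCommGroup A] [Module k A]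
  [AddCommGroup M] [Module k M]
variable (br : A → A → A → A) (ρ : A → A → M →ₗ[k] M)

lemma update_cons_zero {n : ℕ} (X v : A × A) (P : Fin n → A × A) :
    Function.update (Fin.cons X P : Fin (n + 1) → A × A) 0 v = Fin.cons v P := by
  ext l : 1
  refine Fin.cases ?_ (fun j => ?_) l
  · rw [Function.update_self, Fin.cons_zero]
  · rw [Function.update_of_ne (Fin.succ_ne_zero j), Fin.cons_succ, Fin.cons_succ]

/-- [ι_Y, L_X] commutation -/
lemma iota_L (n : ℕ) (x y : A) (Y : A × A) (f : (Fin (n + 1) → A × A) → A → M)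
    (P : Fin n → A × A) (a : A) :
    Lop k br ρ x y (n + 1) f (Fin.cons Y P) a
      = Lop k br ρ x y n (iop n Y f) P a
        - iop n (br x y Y.1, Y.2) f P a - iop n (Y.1, br x y Y.2) f P a := by
  unfold Lop iop Eop
  rw [Fin.sum_univ_succ, Fin.cons_zero, update_cons_zero, update_cons_zero]
  rw [Finset.sum_congr rfl (fun i (_ : i ∈ Finset.univ) => by
    rw [Fin.cons_succ, update_cons_succ, update_cons_succ])]
  abel

/-- [ι_X, Φ] commutation -/
lemma iota_Phi (lam : k) (d : A → A) (dM : M → M) (n : ℕ) (X : A × A)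
    (f : (Fin (n + 1) → A × A) → A → M) (P : Fin n → A × A) (a : A) :
    mdPhi k lam d dM (n + 1) f (Fin.cons X P) a
      = mdPhi k lam d dM n (iop n X f) P a
        + iop n (d X.1, X.2) f P a + iop n (X.1, d X.2) f P a
        + lam • iop n X f P a := by
  unfold mdPhi iop
  rw [Fin.sum_univ_succ, Fin.cons_zero, update_cons_zero, update_cons_zero]
  rw [Finset.sum_congr rfl (fun i (_ : i ∈ Finset.univ) => by
    rw [Fin.cons_succ, update_cons_succ, update_cons_succ])]
  have hc : (((n : ℕ) + 1 : ℕ) : k) * lam = (n : k) * lam + lam := by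
    push_cast; ring
  rw [hc, add_smul]
  abel

/-- ι preserves cochains -/
lemma iota_cochain (n : ℕ) (X : A × A) (f : (Fin (n + 1) → A × A) → A → M)
    (hf : IsCochain k (n + 1) f) : IsCochain k n (iop n X f) := by
  obtain ⟨h1, h2, h3, h4⟩ := hf
  refine ⟨fun i P t u u' b a => ?_, fun i P t u v v' a => ?_, fun i P a => ?_,
    fun P t a a' => h4 _ t a a'⟩
  · unfold iop
    rw [← update_cons_succ, ← update_cons_succ, ← update_cons_succ, h1 i.succ]
  · unfold iop
    rw [← update_cons_succ, ← update_cons_succ, ← update_cons_succ, h2 i.succ]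
  · unfold iop
    rw [← update_cons_succ]
    rw [show ((P i).2, (P i).1)
        = (((Fin.cons X P : Fin (n+1) → A × A) i.succ).2,
            ((Fin.cons X P : Fin (n+1) → A × A) i.succ).1) by rw [Fin.cons_succ]]
    rw [h3 i.succ]

section CochainHelpers

variable {n : ℕ} {f : (Fin n → A × A) → A → M}

lemma coch_add1 (hf : IsCochain k n f) (P : Fin n → A × A) (i : Fin n) (u v b : A) (a : A) :
    f (Function.update P i (u + v, b)) a
      = f (Function.update P i (u, b)) a + f (Function.update P i (v, b)) a := by
  have := hf.1 i P 1 u v b a; rwa [one_smul, one_smul] at this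

lemma coch_add2 (hf : IsCochain k n f) (P : Fin n → A × A) (i : Fin n) (b u v : A) (a : A) :
    f (Function.update P i (b, u + v)) a
      = f (Function.update P i (b, u)) a + f (Function.update P i (b, v)) a := by
  have := hf.2.1 i P 1 b u v a; rwa [one_smul, one_smul] at this

lemma coch_addA (hf : IsCochain k n f) (P : Fin n → A × A) (u v : A) :
    f P (u + v) = f P u + f P v := by
  have := hf.2.2.2 P 1 u v; rwa [one_smul, one_smul] at this

lemma coch_zero1 (hf : IsCochain k n f) (P : Fin n → A × A) (i : Fin n) (b : A) (a : A) :
    f (Function.update P i (0, b)) a = 0 := by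
  have := coch_add1 hf P i 0 0 b a
  rw [add_zero] at this
  exact (left_eq_add.mp this)

lemma coch_zero2 (hf : IsCochain k n f) (P : Fin n → A × A) (i : Fin n) (b : A) (a : A) :
    f (Function.update P i (b, 0)) a = 0 := by
  have := coch_add2 hf P i b 0 0 a
  rw [add_zero] at this
  exact (left_eq_add.mp this)

lemma coch_smul1 (hf : IsCochain k n f) (P : Fin n → A × A) (i : Fin n) (t : k) (u b : A) (a : A) :
    f (Function.update P i (t • u, b)) a = t • f (Function.update P i (u, b)) a := by
  have := hf.1 i P t u 0 b a
  rw [add_zero, coch_zero1 hf, add_zero] at this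
  exact this

lemma coch_smul2 (hf : IsCochain k n f) (P : Fin n → A × A) (i : Fin n) (t : k) (b u : A) (a : A) :
    f (Function.update P i (b, t • u)) a = t • f (Function.update P i (b, u)) a := by
  have := hf.2.1 i P t b u 0 a
  rw [add_zero, coch_zero2 hf, add_zero] at this
  exact this

lemma coch_smulA (hf : IsCochain k n f) (P : Fin n → A × A) (t : k) (a : A) :
    f P (t • a) = t • f P a := by
  have h0 : f P 0 = 0 := by
    have := coch_addA hf P 0 0
    rw [add_zero] at this
    exact (left_eq_add.mp this)
  have := hf.2.2.2 P t a 0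
  rw [add_zero, h0, add_zero] at this
  exact this

end CochainHelpers

/-- double sums which agree off-diagonal after transposition -/
lemma double_sum_comm_diag {n : ℕ} (T S : Fin n → Fin n → M)
    (h : ∀ i j, i ≠ j → T i j = S j i) :
    (∑ i, ∑ j, T i j) = (∑ i, ∑ j, S i j) + ∑ i, (T i i - S i i) := by
  have hS : (∑ i, ∑ j, S i j) = ∑ i, ∑ j, S j i := Finset.sum_comm
  rw [hS, ← Finset.sum_add_distrib]
  refine Finset.sum_congr rfl (fun i _ => ?_)
  have : ∀ j, T i j = S j i + (if j = i then T i i - S i i else 0) := by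
    intro j
    by_cases hj : j = i
    · subst hj; simp
    · rw [h i j (fun hc => hj hc.symm), if_neg hj, add_zero]
  rw [Finset.sum_congr rfl (fun j _ => this j), Finset.sum_add_distrib,
    Finset.sum_ite_eq' Finset.univ i (fun _ => T i i - S i i)]
  simp

/-- single-slot update operator -/
def Uop {n : ℕ} (g : A × A → A × A) (f : (Fin n → A × A) → A → M) :
    (Fin n → A × A) → A → M :=
  fun P a => ∑ i, f (Function.update P i (g (P i))) a

lemma Uop_add {n : ℕ} (g : A × A → A × A) (u v : (Fin n → A × A) → A → M) :
    Uop g (fun Q b => u Q b + v Q b) = fun P a => Uop g u P a + Uop g v P a := by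
  funext P a
  unfold Uop
  rw [← Finset.sum_add_distrib]

lemma Uop_comm {n : ℕ} (g h : A × A → A × A) (f : (Fin n → A × A) → A → M)
    (P : Fin n → A × A) (a : A) :
    Uop g (Uop h f) P a
      = Uop h (Uop g f) P a
        + ∑ i, (f (Function.update P i (h (g (P i)))) a
            - f (Function.update P i (g (h (P i)))) a) := by
  unfold Uop
  refine (double_sum_comm_diag _ (fun i j => f (Function.update (Function.update P i (h (P i))) j
      (g (Function.update P i (h (P i)) j))) a) ?_).trans ?_
  · intro i j hij
    rw [Function.update_of_ne (Ne.symm hij), Function.update_comm hij,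
      Function.update_of_ne hij]
  · congr 1
    refine Finset.sum_congr rfl fun i _ => ?_
    rw [Function.update_self, Function.update_idem, Function.update_self,
      Function.update_idem]

lemma Eop_eq_Uop {n : ℕ} (σ : A → A) (f : (Fin n → A × A) → A → M) :
    Eop n σ f = fun P a => Uop (fun p => (σ p.1, p.2)) f P a
      + Uop (fun p => (p.1, σ p.2)) f P a := by
  funext P a
  unfold Eop Uop
  rw [← Finset.sum_add_distrib]

lemma Uop_add' {n : ℕ} (g : A × A → A × A) (u v : (Fin n → A × A) → A → M)
    (P : Fin n → A × A) (a : A) :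
    Uop g (fun Q b => u Q b + v Q b) P a = Uop g u P a + Uop g v P a := by
  unfold Uop
  rw [← Finset.sum_add_distrib]

lemma Eop_eq_Uop' {n : ℕ} (σ : A → A) (f : (Fin n → A × A) → A → M)
    (P : Fin n → A × A) (a : A) :
    Eop n σ f P a = Uop (fun p => (σ p.1, p.2)) f P a
      + Uop (fun p => (p.1, σ p.2)) f P a := by
  unfold Eop Uop
  rw [← Finset.sum_add_distrib]

/-- E-operator commutator: reduces to the diagonal -/
lemma Eop_comm {n : ℕ} (σ τ : A → A) (f : (Fin n → A × A) → A → M)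
    (P : Fin n → A × A) (a : A) :
    Eop n σ (Eop n τ f) P a
      = Eop n τ (Eop n σ f) P a
        + ∑ i, ((f (Function.update P i (τ (σ (P i).1), (P i).2)) a
            - f (Function.update P i (σ (τ (P i).1), (P i).2)) a)
            + (f (Function.update P i ((P i).1, τ (σ (P i).2))) a
            - f (Function.update P i ((P i).1, σ (τ (P i).2))) a)) := by
  rw [Eop_eq_Uop' σ (Eop n τ f) P a, Eop_eq_Uop' τ (Eop n σ f) P a,
    Eop_eq_Uop τ f, Eop_eq_Uop σ f]
  simp only [Uop_add']
  rw [Uop_comm (fun p => (σ p.1, p.2)) (fun p => (τ p.1, p.2)) f P a,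
    Uop_comm (fun p => (σ p.1, p.2)) (fun p => (p.1, τ p.2)) f P a,
    Uop_comm (fun p => (p.1, σ p.2)) (fun p => (τ p.1, p.2)) f P a,
    Uop_comm (fun p => (p.1, σ p.2)) (fun p => (p.1, τ p.2)) f P a]
  dsimp only
  simp only [sub_self, Finset.sum_const_zero, add_zero]
  rw [Finset.sum_add_distrib]
  abel

end MDOps
section MDRes
set_option linter.unusedSectionVars false
set_option maxHeartbeats 1000000

variable {k : Type*} {A M : Type*} [Field k] [AddCommGroup A] [Module k A]
  [AddCommGroup M] [Module k M]
variable {br : A → A → A → A} {ρ : A → A → M →ₗ[k] M}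

lemma rho_skew (hρ : Is3LieRep k br ρ) (a b : A) (w : M) : ρ a b w = - ρ b a w := by
  rw [hρ.2.2.1 a b]; rfl

lemma rho_rep (hρ : Is3LieRep k br ρ) (a1 a2 a3 a4 : A) (w : M) :
    ρ (br a1 a2 a3) a4 w = ρ a2 a3 (ρ a1 a4 w) + ρ a3 a1 (ρ a2 a4 w) + ρ a1 a2 (ρ a3 a4 w) := by
  have := LinearMap.congr_fun (hρ.2.2.2.1 a1 a2 a3 a4) w
  simpa using this

lemma rho_comm (hρ : Is3LieRep k br ρ) (a1 a2 a3 a4 : A) (w : M) :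
    ρ a1 a2 (ρ a3 a4 w) = ρ a3 a4 (ρ a1 a2 w) + ρ (br a1 a2 a3) a4 w + ρ a3 (br a1 a2 a4) w := by
  have := LinearMap.congr_fun (hρ.2.2.2.2 a1 a2 a3 a4) w
  simpa using this

variable {n : ℕ} {f : (Fin n → A × A) → A → M}

lemma Eop_Lop (x y u v : A) (P : Fin n → A × A) (a : A) :
    Eop n (br x y) (Lop k br ρ u v n f) P a
      = ρ u v (Eop n (br x y) f P a) - Eop n (br x y) (Eop n (br u v) f) P a
        - Eop n (br x y) f P (br u v a) := by
  unfold Lop Eop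
  rw [map_sum, ← Finset.sum_sub_distrib, ← Finset.sum_sub_distrib]
  refine Finset.sum_congr rfl fun i _ => ?_
  simp only [map_add]
  abel

lemma resLL (h3 : Is3LieBr k br) (hρ : Is3LieRep k br ρ) (hf : IsCochain k n f)
    (x y u v : A) (P : Fin n → A × A) (a : A) :
    Lop k br ρ x y n (Lop k br ρ u v n f) P a
      = Lop k br ρ u v n (Lop k br ρ x y n f) P a
        + Lop k br ρ (br x y u) v n f P a + Lop k br ρ u (br x y v) n f P a := by
  have hL1 : Lop k br ρ x y n (Lop k br ρ u v n f) P a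
      = ρ x y (Lop k br ρ u v n f P a) - Eop n (br x y) (Lop k br ρ u v n f) P a
        - Lop k br ρ u v n f P (br x y a) := rfl
  have hL2 : Lop k br ρ u v n (Lop k br ρ x y n f) P a
      = ρ u v (Lop k br ρ x y n f P a) - Eop n (br u v) (Lop k br ρ x y n f) P a
        - Lop k br ρ x y n f P (br u v a) := rfl
  rw [hL1, hL2, Eop_Lop, Eop_Lop]
  have hcomm := Eop_comm (br x y) (br u v) f P a
  have hdiag : ∑ i, ((f (Function.update P i (br u v (br x y (P i).1), (P i).2)) a
        - f (Function.update P i (br x y (br u v (P i).1), (P i).2)) a)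
        + (f (Function.update P i ((P i).1, br u v (br x y (P i).2))) a
        - f (Function.update P i ((P i).1, br x y (br u v (P i).2))) a))
      = - Eop n (br (br x y u) v) f P a - Eop n (br u (br x y v)) f P a := by
    unfold Eop
    rw [Finset.sum_congr rfl (fun i (_ : i ∈ Finset.univ) => by
      rw [h3.2 x y u v (P i).1, h3.2 x y u v (P i).2,
        coch_add1 hf _ _ _ _, coch_add1 hf _ _ _ _,
        coch_add2 hf _ _ _ _, coch_add2 hf _ _ _ _])]
    simp only [Finset.sum_sub_distrib, Finset.sum_add_distrib]
    abel
  rw [hcomm, hdiag]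
  -- expand the remaining Lop applications
  have hA : Lop k br ρ u v n f P (br x y a)
      = ρ u v (f P (br x y a)) - Eop n (br u v) f P (br x y a) - f P (br u v (br x y a)) := rfl
  have hB : Lop k br ρ x y n f P (br u v a)
      = ρ x y (f P (br u v a)) - Eop n (br x y) f P (br u v a) - f P (br x y (br u v a)) := rfl
  have hC : Lop k br ρ (br x y u) v n f P a
      = ρ (br x y u) v (f P a) - Eop n (br (br x y u) v) f P a - f P (br (br x y u) v a) := rfl
  have hD : Lop k br ρ u (br x y v) n f P a
      = ρ u (br x y v) (f P a) - Eop n (br u (br x y v)) f P a - f P (br u (br x y v) a) := rfl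
  have hE : Lop k br ρ u v n f P a
      = ρ u v (f P a) - Eop n (br u v) f P a - f P (br u v a) := rfl
  have hF : Lop k br ρ x y n f P a
      = ρ x y (f P a) - Eop n (br x y) f P a - f P (br x y a) := rfl
  rw [hA, hB, hC, hD, hE, hF]
  simp only [map_sub]
  rw [rho_comm hρ x y u v (f P a)]
  rw [h3.2 x y u v a, coch_addA hf _ _ _, coch_addA hf _ _ _]
  abel

variable {lam : k} {d : A → A} {dM : M →ₗ[k] M}

lemma Eop_Phi (σ : A → A) (P : Fin n → A × A) (a : A) :
    Eop n σ (mdPhi k lam d (⇑dM) n f) P a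
      = Eop n σ (Eop n d f) P a + Eop n σ f P (d a)
        + ((n : k) * lam) • Eop n σ f P a - dM (Eop n σ f P a) := by
  unfold mdPhi Eop
  rw [map_sum, Finset.smul_sum, ← Finset.sum_add_distrib, ← Finset.sum_add_distrib,
    ← Finset.sum_sub_distrib]
  refine Finset.sum_congr rfl fun i _ => ?_
  simp only [map_add, smul_add]
  abel

lemma Eop_Lop' (σ : A → A) (x y : A) (P : Fin n → A × A) (a : A) :
    Eop n σ (Lop k br ρ x y n f) P a
      = ρ x y (Eop n σ f P a) - Eop n σ (Eop n (br x y) f) P a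
        - Eop n σ f P (br x y a) := by
  unfold Lop Eop
  rw [map_sum, ← Finset.sum_sub_distrib, ← Finset.sum_sub_distrib]
  refine Finset.sum_congr rfl fun i _ => ?_
  simp only [map_add]
  abel

lemma resLPhi (h3 : Is3LieBr k br) (hρ : Is3LieRep k br ρ)
    (hd : IsMDiffOn k br lam d) (hdM : IsMDiffRep k ρ lam d (⇑dM))
    (hf : IsCochain k n f) (x y : A) (P : Fin n → A × A) (a : A) :
    Lop k br ρ x y n (mdPhi k lam d (⇑dM) n f) P a
      = mdPhi k lam d (⇑dM) n (Lop k br ρ x y n f) P a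
        + lam • Lop k br ρ x y n f P a
        + Lop k br ρ (d x) y n f P a + Lop k br ρ x (d y) n f P a := by
  have hL1 : Lop k br ρ x y n (mdPhi k lam d (⇑dM) n f) P a
      = ρ x y (mdPhi k lam d (⇑dM) n f P a)
        - Eop n (br x y) (mdPhi k lam d (⇑dM) n f) P a
        - mdPhi k lam d (⇑dM) n f P (br x y a) := rfl
  have hL2 : mdPhi k lam d (⇑dM) n f P a
      = Eop n d f P a + f P (d a) + ((n : k) * lam) • f P a - dM (f P a) := rfl
  have hL3 : mdPhi k lam d (⇑dM) n f P (br x y a)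
      = Eop n d f P (br x y a) + f P (d (br x y a))
        + ((n : k) * lam) • f P (br x y a) - dM (f P (br x y a)) := rfl
  have hR1 : mdPhi k lam d (⇑dM) n (Lop k br ρ x y n f) P a
      = Eop n d (Lop k br ρ x y n f) P a + Lop k br ρ x y n f P (d a)
        + ((n : k) * lam) • Lop k br ρ x y n f P a
        - dM (Lop k br ρ x y n f P a) := rfl
  have hR2 : Lop k br ρ x y n f P (d a)
      = ρ x y (f P (d a)) - Eop n (br x y) f P (d a) - f P (br x y (d a)) := rfl
  have hR3 : Lop k br ρ x y n f P a
      = ρ x y (f P a) - Eop n (br x y) f P a - f P (br x y a) := rfl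
  have hR4 : Lop k br ρ (d x) y n f P a
      = ρ (d x) y (f P a) - Eop n (br (d x) y) f P a - f P (br (d x) y a) := rfl
  have hR5 : Lop k br ρ x (d y) n f P a
      = ρ x (d y) (f P a) - Eop n (br x (d y)) f P a - f P (br x (d y) a) := rfl
  rw [hL1, hL2, hL3, hR1, hR2, hR3, hR4, hR5, Eop_Phi, Eop_Lop']
  -- E-E commutator and its diagonal
  have hcomm := Eop_comm (br x y) d f P a
  have hdiag : ∑ i, ((f (Function.update P i (d (br x y (P i).1), (P i).2)) a
        - f (Function.update P i (br x y (d (P i).1), (P i).2)) a)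
        + (f (Function.update P i ((P i).1, d (br x y (P i).2))) a
        - f (Function.update P i ((P i).1, br x y (d (P i).2))) a))
      = Eop n (br (d x) y) f P a + Eop n (br x (d y)) f P a
        + lam • Eop n (br x y) f P a := by
    unfold Eop
    rw [Finset.sum_congr rfl (fun i (_ : i ∈ Finset.univ) => by
      rw [hd x y (P i).1, hd x y (P i).2,
        coch_add1 hf _ _ _ _, coch_add1 hf _ _ _ _, coch_add1 hf _ _ _ _,
        coch_smul1 hf _ _ _ _ _,
        coch_add2 hf _ _ _ _, coch_add2 hf _ _ _ _, coch_add2 hf _ _ _ _,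
        coch_smul2 hf _ _ _ _ _])]
    rw [Finset.smul_sum]
    simp only [Finset.sum_sub_distrib, Finset.sum_add_distrib, smul_add]
    abel
  rw [hcomm, hdiag]
  simp only [map_add, map_sub, map_smul, smul_sub, smul_add]
  -- remaining pointwise identities
  rw [show dM (ρ x y (f P a)) = ρ (d x) y (f P a) + ρ x (d y) (f P a)
      + ρ x y (dM (f P a)) + lam • ρ x y (f P a) from hdM x y (f P a)]
  rw [hd x y a, coch_addA hf _ _ _, coch_addA hf _ _ _, coch_addA hf _ _ _,
    coch_smulA hf _ _ _]
  abel

lemma ite_add_zero' {c : Prop} [Decidable c] (u v : M) :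
    (if c then u + v else (0:M)) = (if c then u else 0) + (if c then v else 0) := by
  split <;> simp

lemma ite_sub_zero' {c : Prop} [Decidable c] (u v : M) :
    (if c then u - v else (0:M)) = (if c then u else 0) - (if c then v else 0) := by
  split <;> simp

lemma delta_add (m : ℕ) (u v : (Fin m → A × A) → A → M) (P : Fin (m+1) → A × A) (a : A) :
    threeLieDelta k br ρ m (fun Q b => u Q b + v Q b) P a
      = threeLieDelta k br ρ m u P a + threeLieDelta k br ρ m v P a := by
  unfold threeLieDelta
  simp only [map_add, smul_add]
  simp only [ite_add_zero']
  simp only [Finset.sum_add_distrib]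
  abel

lemma delta_sub (m : ℕ) (u v : (Fin m → A × A) → A → M) (P : Fin (m+1) → A × A) (a : A) :
    threeLieDelta k br ρ m (fun Q b => u Q b - v Q b) P a
      = threeLieDelta k br ρ m u P a - threeLieDelta k br ρ m v P a := by
  unfold threeLieDelta
  simp only [sub_eq_add_neg, map_add, map_neg, smul_add, smul_neg]
  simp only [ite_add_zero', ite_neg_zero]
  simp only [Finset.sum_add_distrib, Finset.sum_neg_distrib]
  abel

lemma delta_zsmul (m : ℕ) (z : ℤ) (u : (Fin m → A × A) → A → M) (P : Fin (m+1) → A × A) (a : A) :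
    threeLieDelta k br ρ m (fun Q b => z • u Q b) P a
      = z • threeLieDelta k br ρ m u P a := by
  unfold threeLieDelta
  simp only [map_zsmul]
  simp only [smul_add, Finset.smul_sum]
  simp only [smul_ite, smul_zero]
  simp only [smul_add]
  simp only [smul_smul]
  simp only [mul_comm]

lemma delta_ksmul (m : ℕ) (t : k) (u : (Fin m → A × A) → A → M) (P : Fin (m+1) → A × A) (a : A) :
    threeLieDelta k br ρ m (fun Q b => t • u Q b) P a
      = t • threeLieDelta k br ρ m u P a := by
  unfold threeLieDelta
  simp only [map_smul]
  simp only [smul_add, Finset.smul_sum]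
  simp only [smul_ite, smul_zero]
  simp only [smul_add]
  simp only [smul_comm t]

lemma delta_neg (m : ℕ) (u : (Fin m → A × A) → A → M) (P : Fin (m+1) → A × A) (a : A) :
    threeLieDelta k br ρ m (fun Q b => - u Q b) P a
      = - threeLieDelta k br ρ m u P a := by
  have := delta_zsmul (br := br) (ρ := ρ) m (-1) u P a
  simp only [neg_smul, one_smul] at this
  exact this

lemma mdPhi_sub (m : ℕ) (u v : (Fin m → A × A) → A → M) (P : Fin m → A × A) (a : A) :
    mdPhi k lam d (⇑dM) m (fun Q b => u Q b - v Q b) P a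
      = mdPhi k lam d (⇑dM) m u P a - mdPhi k lam d (⇑dM) m v P a := by
  unfold mdPhi
  simp only [sub_eq_add_neg, map_add, map_neg, smul_add, smul_neg,
    Finset.sum_add_distrib, Finset.sum_neg_distrib]
  abel

lemma delta0_eval (f : (Fin 0 → A × A) → A → M) (P : Fin 1 → A × A) (a : A) :
    threeLieDelta k br ρ 0 f P a
      = ρ (P 0).2 a (f (fun i : Fin 0 => i.elim0) (P 0).1)
        + ρ a (P 0).1 (f (fun i : Fin 0 => i.elim0) (P 0).2)
        + ρ (P 0).1 (P 0).2 (f (fun i : Fin 0 => i.elim0) a)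
        - f (fun i : Fin 0 => i.elim0) (br (P 0).1 (P 0).2 a) := by
  have hF : ∀ (Q' : Fin 0 → A × A) (x : A), f Q' x = f (fun i : Fin 0 => i.elim0) x :=
    fun Q' x => by congr 1; funext i; exact i.elim0
  unfold threeLieDelta
  simp only [hF, Fin.sum_univ_succ, Finset.univ_eq_empty, Finset.sum_empty,
    Fin.last_zero, pow_zero, pow_one, one_smul, Fin.val_zero, zero_add, add_zero,
    lt_self_iff_false, if_false, Finset.sum_const_zero]
  abel

lemma delta1_eval (g : (Fin 1 → A × A) → A → M) (Q : Fin 2 → A × A) (a : A) :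
    threeLieDelta k br ρ 1 g Q a
      = - ρ (Q 1).2 a (g (fun _ => Q 0) (Q 1).1) - ρ a (Q 1).1 (g (fun _ => Q 0) (Q 1).2)
        + ρ (Q 0).1 (Q 0).2 (g (fun _ => Q 1) a) - ρ (Q 1).1 (Q 1).2 (g (fun _ => Q 0) a)
        - g (fun _ => Q 1) (br (Q 0).1 (Q 0).2 a) + g (fun _ => Q 0) (br (Q 1).1 (Q 1).2 a)
        - g (fun _ => (br (Q 0).1 (Q 0).2 (Q 1).1, (Q 1).2)) a
        - g (fun _ => ((Q 1).1, br (Q 0).1 (Q 0).2 (Q 1).2)) a := by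
  have h01 : (0 : Fin 2) < 1 := by decide
  have h00 : ¬ (0 : Fin 2) < 0 := by decide
  have h10 : ¬ (1 : Fin 2) < 0 := by decide
  have h11 : ¬ (1 : Fin 2) < 1 := by decide
  have e1 : (fun j : Fin 1 => Q j.castSucc) = (fun _ : Fin 1 => Q 0) :=
    funext fun j => by rw [Fin.fin_one_eq_zero j, Fin.castSucc_zero]
  have e2 : (fun j : Fin 1 => Q (Fin.succAbove 0 j)) = (fun _ : Fin 1 => Q 1) :=
    funext fun j => by rw [Fin.fin_one_eq_zero j]; congr 1
  have e3 : (fun j : Fin 1 => Q (Fin.succAbove 1 j)) = (fun _ : Fin 1 => Q 0) :=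
    funext fun j => by rw [Fin.fin_one_eq_zero j]; congr 1
  have e4 : ∀ v : A × A, (fun l : Fin 1 => if Fin.succAbove 0 l = 1 then v
      else Q (Fin.succAbove 0 l)) = (fun _ : Fin 1 => v) :=
    fun v => funext fun l => by rw [Fin.fin_one_eq_zero l]; simp
  unfold threeLieDelta
  simp only [Fin.sum_univ_succ, Finset.univ_eq_empty, Finset.sum_empty,
    show Fin.succ (0 : Fin 1) = (1 : Fin 2) from rfl,
    show Fin.last 1 = (1 : Fin 2) from rfl,
    show ((1 : Fin 2) : ℕ) = 1 from rfl, show ((0 : Fin 2) : ℕ) = 0 from rfl,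
    h01, h00, h10, h11, if_true, if_false, eq_self_iff_true, not_false_iff,
    zero_add, add_zero, pow_zero, pow_one, one_smul, neg_smul, neg_one_sq,
    show ((-1:ℤ))^(1+1) = 1 from by norm_num, e1, e2, e3, e4]
  abel


lemma rho_rep2 (hρ : Is3LieRep k br ρ) (a1 a2 a3 a4 : A) (w : M) :
    ρ a4 (br a1 a2 a3) w
      = ρ a2 a3 (ρ a4 a1 w) + ρ a3 a1 (ρ a4 a2 w) + ρ a1 a2 (ρ a4 a3 w) := by
  rw [rho_skew hρ a4 (br a1 a2 a3) w, rho_rep hρ a1 a2 a3 a4 w,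
    rho_skew hρ a1 a4 w, rho_skew hρ a2 a4 w, rho_skew hρ a3 a4 w]
  simp only [map_neg]
  abel

lemma DD0 (h3 : Is3LieBr k br) (hρ : Is3LieRep k br ρ)
    (f : (Fin 0 → A × A) → A → M) (hf : IsCochain k 0 f)
    (Q : Fin 2 → A × A) (a : A) :
    threeLieDelta k br ρ 1 (threeLieDelta k br ρ 0 f) Q a = 0 := by
  rw [delta1_eval]
  simp only [delta0_eval]
  simp only [map_add, map_sub]
  rw [h3.2 (Q 0).1 (Q 0).2 (Q 1).1 (Q 1).2 a, coch_addA hf, coch_addA hf]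
  rw [rho_comm hρ (Q 0).1 (Q 0).2 (Q 1).1 (Q 1).2 (f (fun i => i.elim0) a)]
  rw [rho_comm hρ (Q 0).1 (Q 0).2 (Q 1).2 a (f (fun i => i.elim0) (Q 1).1)]
  rw [rho_comm hρ (Q 0).1 (Q 0).2 a (Q 1).1 (f (fun i => i.elim0) (Q 1).2)]
  rw [rho_rep2 hρ (Q 1).1 (Q 1).2 a (Q 0).2 (f (fun i => i.elim0) (Q 0).1)]
  rw [rho_rep hρ (Q 1).1 (Q 1).2 a (Q 0).1 (f (fun i => i.elim0) (Q 0).2)]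
  abel

lemma Eop_zero' (σ : A → A) (g : (Fin 0 → A × A) → A → M) (P : Fin 0 → A × A) (a : A) :
    Eop 0 σ g P a = 0 := by
  unfold Eop
  simp

lemma Eop_one' (σ : A → A) (g : (Fin 1 → A × A) → A → M) (P : Fin 1 → A × A) (a : A) :
    Eop 1 σ g P a = g (Function.update P 0 (σ (P 0).1, (P 0).2)) a
      + g (Function.update P 0 ((P 0).1, σ (P 0).2)) a := by
  unfold Eop
  rw [Fin.sum_univ_succ]
  simp

lemma Lop0_eval (x y : A) (f : (Fin 0 → A × A) → A → M) (P : Fin 0 → A × A) (u : A) :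
    Lop k br ρ x y 0 f P u = ρ x y (f P u) - f P (br x y u) := by
  unfold Lop
  rw [Eop_zero']
  abel

lemma Lc0 (h3 : Is3LieBr k br) (hρ : Is3LieRep k br ρ)
    (f : (Fin 0 → A × A) → A → M) (hf : IsCochain k 0 f) (x y : A)
    (P : Fin 1 → A × A) (a : A) :
    Lop k br ρ x y 1 (threeLieDelta k br ρ 0 f) P a
      = threeLieDelta k br ρ 0 (Lop k br ρ x y 0 f) P a := by
  have hL : Lop k br ρ x y 1 (threeLieDelta k br ρ 0 f) P a
      = ρ x y (threeLieDelta k br ρ 0 f P a)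
        - Eop 1 (br x y) (threeLieDelta k br ρ 0 f) P a
        - threeLieDelta k br ρ 0 f P (br x y a) := rfl
  rw [hL, Eop_one']
  simp only [delta0_eval, Lop0_eval, Function.update_self]
  simp only [map_add, map_sub]
  rw [h3.2 x y (P 0).1 (P 0).2 a, coch_addA hf, coch_addA hf]
  rw [rho_comm hρ x y (P 0).2 a (f (fun i => i.elim0) (P 0).1)]
  rw [rho_comm hρ x y a (P 0).1 (f (fun i => i.elim0) (P 0).2)]
  rw [rho_comm hρ x y (P 0).1 (P 0).2 (f (fun i => i.elim0) a)]
  abel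

variable {lam : k} {d : A → A} {dM : M →ₗ[k] M}

lemma Phi0_eval (f : (Fin 0 → A × A) → A → M) (P : Fin 0 → A × A) (u : A) :
    mdPhi k lam d (⇑dM) 0 f P u = f P (d u) - dM (f P u) := by
  unfold mdPhi
  simp

lemma Phi1_eval (g : (Fin 1 → A × A) → A → M) (P : Fin 1 → A × A) (a : A) :
    mdPhi k lam d (⇑dM) 1 g P a
      = g (Function.update P 0 (d (P 0).1, (P 0).2)) a
        + g (Function.update P 0 ((P 0).1, d (P 0).2)) a
        + g P (d a) + lam • g P a - dM (g P a) := by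
  unfold mdPhi
  rw [Fin.sum_univ_succ]
  simp

lemma PD0 (h3 : Is3LieBr k br) (hρ : Is3LieRep k br ρ)
    (hd : IsMDiffOn k br lam d) (hdM : IsMDiffRep k ρ lam d (⇑dM))
    (f : (Fin 0 → A × A) → A → M) (hf : IsCochain k 0 f)
    (P : Fin 1 → A × A) (a : A) :
    mdPhi k lam d (⇑dM) 1 (threeLieDelta k br ρ 0 f) P a
      = threeLieDelta k br ρ 0 (mdPhi k lam d (⇑dM) 0 f) P a := by
  rw [Phi1_eval]
  simp only [delta0_eval, Phi0_eval, Function.update_self]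
  simp only [map_add, map_sub, smul_add, smul_sub]
  rw [hd (P 0).1 (P 0).2 a, coch_addA hf, coch_addA hf, coch_addA hf, coch_smulA hf]
  rw [hdM (P 0).2 a (f (fun i => i.elim0) (P 0).1)]
  rw [hdM a (P 0).1 (f (fun i => i.elim0) (P 0).2)]
  rw [hdM (P 0).1 (P 0).2 (f (fun i => i.elim0) a)]
  abel

lemma Lop_sub (x y : A) (m : ℕ) (u v : (Fin m → A × A) → A → M) (P : Fin m → A × A) (a : A) :
    Lop k br ρ x y m (fun Q b => u Q b - v Q b) P a
      = Lop k br ρ x y m u P a - Lop k br ρ x y m v P a := by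
  unfold Lop Eop
  simp only [sub_eq_add_neg, map_add, map_neg, neg_add,
    Finset.sum_add_distrib, Finset.sum_neg_distrib]
  abel

lemma cartan_fun (n : ℕ) (f : (Fin (n + 1) → A × A) → A → M) (X : A × A) :
    iop (n + 1) X (threeLieDelta k br ρ (n + 1) f)
      = fun P a => Lop k br ρ X.1 X.2 (n + 1) f P a
        - threeLieDelta k br ρ n (iop n X f) P a := by
  funext P a
  exact eq_sub_of_add_eq (cartan br ρ n f X P a)

lemma cartan_pt (n : ℕ) (f : (Fin (n + 1) → A × A) → A → M) (X : A × A)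
    (P : Fin (n + 1) → A × A) (a : A) :
    iop (n + 1) X (threeLieDelta k br ρ (n + 1) f) P a
      = Lop k br ρ X.1 X.2 (n + 1) f P a
        - threeLieDelta k br ρ n (iop n X f) P a :=
  eq_sub_of_add_eq (cartan br ρ n f X P a)

lemma delta_cons_pt (n : ℕ) (f : (Fin (n + 1) → A × A) → A → M) (X : A × A)
    (P : Fin (n + 1) → A × A) (a : A) :
    threeLieDelta k br ρ (n + 1) f (Fin.cons X P) a
      = Lop k br ρ X.1 X.2 (n + 1) f P a
        - threeLieDelta k br ρ n (iop n X f) P a :=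
  eq_sub_of_add_eq (cartan br ρ n f X P a)

lemma iota_L_fun (n : ℕ) (x y : A) (Y : A × A) (f : (Fin (n + 1) → A × A) → A → M) :
    iop n Y (Lop k br ρ x y (n + 1) f)
      = fun P a => Lop k br ρ x y n (iop n Y f) P a
        - iop n (br x y Y.1, Y.2) f P a - iop n (Y.1, br x y Y.2) f P a := by
  funext P a
  exact iota_L br ρ n x y Y f P a

lemma iota_Phi_fun (lam : k) (d : A → A) (dM : M → M) (n : ℕ) (X : A × A)
    (f : (Fin (n + 1) → A × A) → A → M) :
    iop n X (mdPhi k lam d dM (n + 1) f)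
      = fun P a => mdPhi k lam d dM n (iop n X f) P a
        + iop n (d X.1, X.2) f P a + iop n (X.1, d X.2) f P a
        + lam • iop n X f P a := by
  funext P a
  exact iota_Phi lam d dM n X f P a

lemma Lcomm (h3 : Is3LieBr k br) (hρ : Is3LieRep k br ρ) :
    ∀ (m : ℕ) (f : (Fin m → A × A) → A → M), IsCochain k m f → ∀ (x y : A)
      (P : Fin (m + 1) → A × A) (a : A),
      Lop k br ρ x y (m + 1) (threeLieDelta k br ρ m f) P a
        = threeLieDelta k br ρ m (Lop k br ρ x y m f) P a := by
  intro m
  induction m with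
  | zero => exact fun f hf x y P a => Lc0 h3 hρ f hf x y P a
  | succ m IH =>
    intro f hf x y P a
    rw [show P = Fin.cons (P 0) (Fin.tail P) from (Fin.cons_self_tail P).symm]
    -- LHS
    rw [iota_L br ρ (m+1) x y (P 0) (threeLieDelta k br ρ (m+1) f) (Fin.tail P) a]
    rw [cartan_pt m f (br x y (P 0).1, (P 0).2) (Fin.tail P) a]
    rw [cartan_pt m f ((P 0).1, br x y (P 0).2) (Fin.tail P) a]
    rw [cartan_fun m f (P 0), Lop_sub]
    -- RHS
    rw [delta_cons_pt m (Lop k br ρ x y (m + 1) f) (P 0) (Fin.tail P) a]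
    rw [iota_L_fun m x y (P 0) f, delta_sub, delta_sub]
    -- residual identities
    rw [resLL h3 hρ hf x y (P 0).1 (P 0).2 (Fin.tail P) a]
    rw [IH (iop m (P 0) f) (iota_cochain m (P 0) f hf) x y (Fin.tail P) a]
    abel

lemma DDind (h3 : Is3LieBr k br) (hρ : Is3LieRep k br ρ) :
    ∀ (m : ℕ) (f : (Fin m → A × A) → A → M), IsCochain k m f →
      ∀ (P : Fin (m + 2) → A × A) (a : A),
      threeLieDelta k br ρ (m + 1) (threeLieDelta k br ρ m f) P a = 0 := by
  intro m
  induction m with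
  | zero => exact fun f hf P a => DD0 h3 hρ f hf P a
  | succ m IH =>
    intro f hf P a
    rw [show P = Fin.cons (P 0) (Fin.tail P) from (Fin.cons_self_tail P).symm]
    rw [delta_cons_pt (m+1) (threeLieDelta k br ρ (m+1) f) (P 0) (Fin.tail P) a]
    rw [Lcomm h3 hρ (m+1) f hf (P 0).1 (P 0).2 (Fin.tail P) a]
    rw [cartan_fun m f (P 0), delta_sub]
    rw [show threeLieDelta k br ρ (m+1) (threeLieDelta k br ρ m (iop m (P 0) f)) (Fin.tail P) a = 0 from
      IH (iop m (P 0) f) (iota_cochain m (P 0) f hf) (Fin.tail P) a]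
    abel

lemma PDind (h3 : Is3LieBr k br) (hρ : Is3LieRep k br ρ)
    (hd : IsMDiffOn k br lam d) (hdM : IsMDiffRep k ρ lam d (⇑dM)) :
    ∀ (m : ℕ) (f : (Fin m → A × A) → A → M), IsCochain k m f →
      ∀ (P : Fin (m + 1) → A × A) (a : A),
      mdPhi k lam d (⇑dM) (m + 1) (threeLieDelta k br ρ m f) P a
        = threeLieDelta k br ρ m (mdPhi k lam d (⇑dM) m f) P a := by
  intro m
  induction m with
  | zero => exact fun f hf P a => PD0 h3 hρ hd hdM f hf P a
  | succ m IH =>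
    intro f hf P a
    rw [show P = Fin.cons (P 0) (Fin.tail P) from (Fin.cons_self_tail P).symm]
    -- LHS
    rw [iota_Phi lam d (⇑dM) (m+1) (P 0) (threeLieDelta k br ρ (m+1) f) (Fin.tail P) a]
    rw [cartan_pt m f (d (P 0).1, (P 0).2) (Fin.tail P) a,
      cartan_pt m f ((P 0).1, d (P 0).2) (Fin.tail P) a,
      cartan_pt m f (P 0) (Fin.tail P) a]
    rw [cartan_fun m f (P 0), mdPhi_sub]
    -- RHS
    rw [delta_cons_pt m (mdPhi k lam d (⇑dM) (m+1) f) (P 0) (Fin.tail P) a]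
    rw [iota_Phi_fun lam d (⇑dM) m (P 0) f, delta_add, delta_add, delta_add, delta_ksmul]
    -- residuals
    rw [resLPhi h3 hρ hd hdM hf (P 0).1 (P 0).2 (Fin.tail P) a]
    rw [IH (iop m (P 0) f) (iota_cochain m (P 0) f hf) (Fin.tail P) a]
    simp only [smul_sub]
    abel

end MDRes

/-- the operator `∂(f) = (δf, -Φf)` (on degree 1) and
`∂(f, g) = (δf, δg + (-1)ⁿ Φf)` (on degree `n ≥ 2`) is a coboundary operator:
`∂ ∘ ∂ = 0`.  Here a pair `(f, g) ∈ C^{m+2}` consists of `f` with `m+1`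
pair-arguments and `g` with `m` pair-arguments. -/
theorem stmt8 {k A M : Type*} [Field k] [CharZero k] [AddCommGroup A] [Module k A]
    [AddCommGroup M] [Module k M]
    (br : A → A → A → A) (lam : k) (d : A →ₗ[k] A)
    (h3 : Is3LieBr k br) (hd : IsMDiffOn k br lam ⇑d)
    (ρ : A → A → M →ₗ[k] M) (hρ : Is3LieRep k br ρ) (dM : M →ₗ[k] M)
    (hdM : IsMDiffRep k ρ lam ⇑d ⇑dM) :
    (∀ f : (Fin 0 → A × A) → A → M, IsCochain k 0 f →
      threeLieDelta k br ρ 1 (threeLieDelta k br ρ 0 f) = 0 ∧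
        threeLieDelta k br ρ 0 (-(mdPhi k lam ⇑d ⇑dM 0 f)) +
          mdPhi k lam ⇑d ⇑dM 1 (threeLieDelta k br ρ 0 f) = 0) ∧
    (∀ (m : ℕ) (f : (Fin (m + 1) → A × A) → A → M) (g : (Fin m → A × A) → A → M),
      IsCochain k (m + 1) f → IsCochain k m g →
      threeLieDelta k br ρ (m + 2) (threeLieDelta k br ρ (m + 1) f) = 0 ∧
        threeLieDelta k br ρ (m + 1)
            (threeLieDelta k br ρ m g +
              ((-1 : ℤ) ^ (m + 2)) • mdPhi k lam ⇑d ⇑dM (m + 1) f) +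
          ((-1 : ℤ) ^ (m + 3)) • mdPhi k lam ⇑d ⇑dM (m + 2)
            (threeLieDelta k br ρ (m + 1) f) = 0) := by
  constructor
  · intro f hf
    constructor
    · funext P a
      show threeLieDelta k br ρ 1 (threeLieDelta k br ρ 0 f) P a = 0
      exact DD0 h3 hρ f hf P a
    · funext P a
      show threeLieDelta k br ρ 0 (-(mdPhi k lam ⇑d ⇑dM 0 f)) P a
        + mdPhi k lam ⇑d ⇑dM 1 (threeLieDelta k br ρ 0 f) P a = 0
      rw [show (-(mdPhi k lam ⇑d ⇑dM 0 f))
          = (fun Q b => -(mdPhi k lam ⇑d ⇑dM 0 f Q b)) from rfl]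
      rw [delta_neg, PD0 h3 hρ hd hdM f hf P a]
      abel
  · intro m f g hf hg
    constructor
    · funext P a
      show threeLieDelta k br ρ (m + 2) (threeLieDelta k br ρ (m + 1) f) P a = 0
      exact DDind h3 hρ (m + 1) f hf P a
    · funext P a
      show threeLieDelta k br ρ (m + 1)
          (threeLieDelta k br ρ m g +
            ((-1 : ℤ) ^ (m + 2)) • mdPhi k lam ⇑d ⇑dM (m + 1) f) P a
        + ((-1 : ℤ) ^ (m + 3)) • mdPhi k lam ⇑d ⇑dM (m + 2)
            (threeLieDelta k br ρ (m + 1) f) P a = 0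
      rw [show (threeLieDelta k br ρ m g +
            ((-1 : ℤ) ^ (m + 2)) • mdPhi k lam ⇑d ⇑dM (m + 1) f)
          = (fun Q b => threeLieDelta k br ρ m g Q b +
            ((-1 : ℤ) ^ (m + 2)) • mdPhi k lam ⇑d ⇑dM (m + 1) f Q b) from rfl]
      rw [delta_add, delta_zsmul]
      rw [DDind h3 hρ m g hg P a]
      rw [PDind h3 hρ hd hdM (m + 1) f hf P a]
      rw [show ((-1 : ℤ) ^ (m + 3)) = -((-1 : ℤ) ^ (m + 2)) from by
        rw [pow_succ, mul_neg_one]]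
      simp only [neg_smul]
      abel
end

section
/- Let (A[[t]], ν_t, d_t) with ν_t = ν0 + tν1 + t²ν2 and d_t = d + t d1 be a linear deformation of the modified λ-differential 3-Lie algebra (A, ν0 = [-,-,-], d). Then (ν1, d1) is a 2-cocycle with coefficients in the adjoint representation (A; ad, d); explicitly, for all a1,...,a5 ∈ A: ν1(a1,a2,[a3,a4,a5]) + [a1,a2,ν1(a3,a4,a5)] = ν1([a1,a2,a3],a4,a5) + [ν1(a1,a2,a3),a4,a5] + ν1(a3,[a1,a2,a4],a5) + [a3,ν1(a1,a2,a4),a5] + ν1(a3,a4,[a1,a2,a5]) + [a3,a4,ν1(a1,a2,a5)], and for all a1,a2,a3 ∈ A: d1([a1,a2,a3]) + d(ν1(a1,a2,a3)) = [d1(a1),a2,a3] + ν1(d(a1),a2,a3) + [a1,d1(a2),a3] + ν1(a1,d(a2),a3) + [a1,a2,d1(a3)] + ν1(a1,a2,d(a3)) + λν1(a1,a2,a3). -/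
open Finset

section DeformDefs

variable {A : Type*} [AddCommGroup A]

/-- The family of coefficients `ν₀ = br, ν₁, ν₂, νₛ = 0 (s > 2)` of `ν_t`. -/
def nuCoef (br nu1 nu2 : A → A → A → A) : ℕ → A → A → A → A := fun s =>
  if s = 0 then br else if s = 1 then nu1 else if s = 2 then nu2
    else fun _ _ _ => 0

/-- The family of coefficients `d₀ = d, d₁, dₗ = 0 (l > 1)` of `d_t`. -/
def dCoef (d d1 : A → A) : ℕ → A → A := fun l =>
  if l = 0 then d else if l = 1 then d1 else fun _ => 0

/-- The `t`-linear extension `ν_t = ν₀ + t ν₁ + t² ν₂` to `A[[t]]`, where an element of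
`A[[t]]` is encoded as its sequence of coefficients `ℕ → A`. -/
def nuT (br nu1 nu2 : A → A → A → A) :
    (ℕ → A) → (ℕ → A) → (ℕ → A) → (ℕ → A) := fun x y z n =>
  ∑ p ∈ Finset.Nat.antidiagonalTuple 4 n,
    nuCoef br nu1 nu2 (p 3) (x (p 0)) (y (p 1)) (z (p 2))

/-- The `t`-linear extension `d_t = d + t d₁` to `A[[t]]`. -/
def dT (d d1 : A → A) : (ℕ → A) → (ℕ → A) := fun x n =>
  ∑ p ∈ Finset.HasAntidiagonal.antidiagonal n, dCoef d d1 p.2 (x p.1)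

/-- The inclusion `A → A[[t]]` as constant power series. -/
def constT (a : A) : ℕ → A := fun n => if n = 0 then a else 0

end DeformDefs

section DeformProp

variable (k : Type*) {A : Type*} [Field k] [AddCommGroup A] [Module k A]

/-- `(ν_t, d_t)` endows `A[[t]]` with a modified `λ`-differential 3-Lie algebra
structure: `ν_t` satisfies the Filippov identity and `d_t` the modified
`λ`-differential identity. -/
def IsLinearDeformation (br nu1 nu2 : A → A → A → A) (lam : k) (d d1 : A → A) :
    Prop :=
  (∀ x y z w u : ℕ → A,
    nuT br nu1 nu2 x y (nuT br nu1 nu2 z w u) =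
      nuT br nu1 nu2 (nuT br nu1 nu2 x y z) w u +
        nuT br nu1 nu2 z (nuT br nu1 nu2 x y w) u +
          nuT br nu1 nu2 z w (nuT br nu1 nu2 x y u)) ∧
  (∀ x y z : ℕ → A,
    dT d d1 (nuT br nu1 nu2 x y z) =
      nuT br nu1 nu2 (dT d d1 x) y z + nuT br nu1 nu2 x (dT d d1 y) z +
        nuT br nu1 nu2 x y (dT d d1 z) + lam • nuT br nu1 nu2 x y z)

end DeformProp

/-! Evaluated at constant series, `ν_t(a, b, c) = [a, b, c] + t ν₁(a, b, c) + t² ν₂(a, b, c)` and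
`d_t a = d a + t d₁ a`, so the coefficient of `t` in the Filippov identity for `ν_t` and in the
modified `λ`-differential identity for `d_t` are exactly the two cocycle identities for `(ν₁, d₁)`. -/

namespace IsTriSkew

variable {k A W : Type*} [Field k] [AddCommGroup A] [Module k A] [AddCommGroup W] [Module k W]
  {f : A → A → A → W}

theorem apply_zero_left (hf : IsTriSkew k f) (b c : A) : f 0 b c = 0 := by
  simpa using hf.1 1 0 0 b c

theorem apply_zero_middle (hf : IsTriSkew k f) (a c : A) : f a 0 c = 0 := by
  rw [hf.2.2.2.1, hf.apply_zero_left, neg_zero]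

theorem apply_zero_right (hf : IsTriSkew k f) (a b : A) : f a b 0 = 0 := by
  rw [hf.2.2.2.2, hf.apply_zero_middle, neg_zero]

end IsTriSkew

section Coefficients

variable {A : Type*} [AddCommGroup A] (br nu1 nu2 : A → A → A → A) (d d1 : A → A)

@[simp]
theorem constT_zero (a : A) : constT a 0 = a := rfl

@[simp]
theorem constT_succ (a : A) (n : ℕ) : constT a (n + 1) = 0 := rfl

theorem Finset.Nat.antidiagonalTuple_four_one : Finset.Nat.antidiagonalTuple 4 1 =
    {![1, 0, 0, 0], ![0, 1, 0, 0], ![0, 0, 1, 0], ![0, 0, 0, 1]} := by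
  decide

theorem nuT_zero (x y z : ℕ → A) : nuT br nu1 nu2 x y z 0 = br (x 0) (y 0) (z 0) := by
  rw [nuT, Finset.Nat.antidiagonalTuple_zero_right, sum_singleton]
  rfl

theorem nuT_one (x y z : ℕ → A) :
    nuT br nu1 nu2 x y z 1 = br (x 1) (y 0) (z 0) + br (x 0) (y 1) (z 0) +
      br (x 0) (y 0) (z 1) + nu1 (x 0) (y 0) (z 0) := by
  rw [nuT, Finset.Nat.antidiagonalTuple_four_one, sum_insert (by decide), sum_insert (by decide),
    sum_insert (by decide), sum_singleton]
  simp only [nuCoef, add_assoc]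
  rfl

theorem dT_zero (x : ℕ → A) : dT d d1 x 0 = d (x 0) := by
  rw [dT, Finset.Nat.antidiagonal_zero, sum_singleton]
  rfl

theorem dT_one (x : ℕ → A) : dT d d1 x 1 = d1 (x 0) + d (x 1) := by
  rw [dT, Finset.Nat.sum_antidiagonal_succ, Finset.Nat.antidiagonal_zero, sum_singleton]
  rfl

end Coefficients

namespace IsLinearDeformation

variable {k A : Type*} [Field k] [AddCommGroup A] [Module k A]
  {br nu1 nu2 : A → A → A → A} {lam : k}

theorem filippov_coeff_one {d d1 : A → A} (hdef : IsLinearDeformation k br nu1 nu2 lam d d1)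
    (hbr : IsTriSkew k br) (a1 a2 a3 a4 a5 : A) :
    nu1 a1 a2 (br a3 a4 a5) + br a1 a2 (nu1 a3 a4 a5) =
      nu1 (br a1 a2 a3) a4 a5 + br (nu1 a1 a2 a3) a4 a5 +
        nu1 a3 (br a1 a2 a4) a5 + br a3 (nu1 a1 a2 a4) a5 +
          nu1 a3 a4 (br a1 a2 a5) + br a3 a4 (nu1 a1 a2 a5) := by
  have h := congrFun (hdef.1 (constT a1) (constT a2) (constT a3) (constT a4) (constT a5)) 1
  simp only [Pi.add_apply, nuT_one, nuT_zero, constT_zero, constT_succ, hbr.apply_zero_left,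
    hbr.apply_zero_middle, hbr.apply_zero_right, zero_add, add_zero] at h
  rw [add_comm, h]
  abel

theorem mdiff_coeff_one {d : A →ₗ[k] A} {d1 : A → A}
    (hdef : IsLinearDeformation k br nu1 nu2 lam d d1)
    (hbr : IsTriSkew k br) (a1 a2 a3 : A) :
    d1 (br a1 a2 a3) + d (nu1 a1 a2 a3) =
      br (d1 a1) a2 a3 + nu1 (d a1) a2 a3 + br a1 (d1 a2) a3 +
        nu1 a1 (d a2) a3 + br a1 a2 (d1 a3) + nu1 a1 a2 (d a3) + lam • nu1 a1 a2 a3 := by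
  have h := congrFun (hdef.2 (constT a1) (constT a2) (constT a3)) 1
  simp only [Pi.add_apply, Pi.smul_apply, dT_one, dT_zero, nuT_one, nuT_zero, constT_zero,
    constT_succ, map_zero, hbr.apply_zero_left, hbr.apply_zero_middle, hbr.apply_zero_right,
    zero_add, add_zero] at h
  rw [h]
  abel

end IsLinearDeformation

theorem stmt10_general {k A : Type*} [Field k] [AddCommGroup A] [Module k A]
    (br : A → A → A → A) (lam : k) (d : A →ₗ[k] A)
    (h3 : Is3LieBr k br)
    (nu1 nu2 : A → A → A → A)
    (d1 : A →ₗ[k] A)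
    (hdef : IsLinearDeformation k br nu1 nu2 lam ⇑d ⇑d1) :
    (∀ a1 a2 a3 a4 a5 : A,
      nu1 a1 a2 (br a3 a4 a5) + br a1 a2 (nu1 a3 a4 a5) =
        nu1 (br a1 a2 a3) a4 a5 + br (nu1 a1 a2 a3) a4 a5 +
          nu1 a3 (br a1 a2 a4) a5 + br a3 (nu1 a1 a2 a4) a5 +
            nu1 a3 a4 (br a1 a2 a5) + br a3 a4 (nu1 a1 a2 a5)) ∧
    (∀ a1 a2 a3 : A,
      d1 (br a1 a2 a3) + d (nu1 a1 a2 a3) =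
        br (d1 a1) a2 a3 + nu1 (d a1) a2 a3 + br a1 (d1 a2) a3 +
          nu1 a1 (d a2) a3 + br a1 a2 (d1 a3) + nu1 a1 a2 (d a3) +
            lam • nu1 a1 a2 a3) :=
  ⟨hdef.filippov_coeff_one h3.1, hdef.mdiff_coeff_one h3.1⟩

/-- the infinitesimal `(ν₁, d₁)` of a linear deformation
`(A[[t]], ν_t, d_t)` of `(A, br, d)` is a 2-cocycle with coefficients in the adjoint
representation. -/
theorem stmt10 {k A : Type*} [Field k] [CharZero k] [AddCommGroup A] [Module k A]
    (br : A → A → A → A) (lam : k) (d : A →ₗ[k] A)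
    (h3 : Is3LieBr k br) (hd : IsMDiffOn k br lam ⇑d)
    (nu1 nu2 : A → A → A → A) (hnu1 : IsTriSkew k nu1) (hnu2 : IsTriSkew k nu2)
    (d1 : A →ₗ[k] A)
    (hdef : IsLinearDeformation k br nu1 nu2 lam ⇑d ⇑d1) :
    (∀ a1 a2 a3 a4 a5 : A,
      nu1 a1 a2 (br a3 a4 a5) + br a1 a2 (nu1 a3 a4 a5) =
        nu1 (br a1 a2 a3) a4 a5 + br (nu1 a1 a2 a3) a4 a5 +
          nu1 a3 (br a1 a2 a4) a5 + br a3 (nu1 a1 a2 a4) a5 +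
            nu1 a3 a4 (br a1 a2 a5) + br a3 a4 (nu1 a1 a2 a5)) ∧
    (∀ a1 a2 a3 : A,
      d1 (br a1 a2 a3) + d (nu1 a1 a2 a3) =
        br (d1 a1) a2 a3 + nu1 (d a1) a2 a3 + br a1 (d1 a2) a3 +
          nu1 a1 (d a2) a3 + br a1 a2 (d1 a3) + nu1 a1 a2 (d a3) +
            lam • nu1 a1 a2 a3) :=
  stmt10_general br lam d h3 nu1 nu2 d1 hdef
end

section
/- Let (A,[-,-,-],d) be a modified λ-differential 3-Lie algebra and N : A → A a Nijenhuis operator, i.e. N∘d = d∘N and [Na1,Na2,Na3] = N([a1,Na2,Na3] + [Na1,a2,Na3] + [Na1,Na2,a3]) - N²([Na1,a2,a3] + [a1,Na2,a3] + [a1,a2,Na3]) + N³([a1,a2,a3]) for all a1,a2,a3 ∈ A. Define [a1,a2,a3]_N = [a1,Na2,Na3] + [Na1,a2,Na3] + [Na1,Na2,a3] - N([Na1,a2,a3] + [a1,Na2,a3] + [a1,a2,Na3]) + N²([a1,a2,a3]). Then (A, [-,-,-]_N, d) is a modified λ-differential 3-Lie algebra; in particular d[a1,a2,a3]_N = [d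 a1,a2,a3]_N + [a1,d a2,a3]_N + [a1,a2,d a3]_N + λ[a1,a2,a3]_N. -/
open Finset

/-- A Nijenhuis operator on a modified `λ`-differential 3-Lie algebra `(A, br, D)`. -/
def IsNijenhuisOn {k A : Type*} [Field k] [AddCommGroup A] [Module k A]
    (br : A → A → A → A) (D : A → A) (N : A → A) : Prop :=
  (∀ a : A, N (D a) = D (N a)) ∧
  ∀ a1 a2 a3 : A,
    br (N a1) (N a2) (N a3) =
      N (br a1 (N a2) (N a3) + br (N a1) a2 (N a3) + br (N a1) (N a2) a3) -
        N (N (br (N a1) a2 a3 + br a1 (N a2) a3 + br a1 a2 (N a3))) +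
          N (N (N (br a1 a2 a3)))

/-- The deformed bracket `[-,-,-]_N` induced by a Nijenhuis operator. -/
def nijBr {k A : Type*} [Field k] [AddCommGroup A] [Module k A]
    (br : A → A → A → A) (N : A →ₗ[k] A) : A → A → A → A := fun a1 a2 a3 =>
  br a1 (N a2) (N a3) + br (N a1) a2 (N a3) + br (N a1) (N a2) a3 -
    N (br (N a1) a2 a3 + br a1 (N a2) a3 + br a1 a2 (N a3)) +
      N (N (br a1 a2 a3))


set_option linter.unusedSectionVars false
set_option maxRecDepth 8000

section Helpers

variable {k A : Type*} [Field k] [CharZero k] [AddCommGroup A] [Module k A]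

open Polynomial in
lemma poly6 (d0 d1 d2 d3 d4 d5 : A)
    (h : ∀ t : k, d0 + t•d1 + t^2•d2 + t^3•d3 + t^4•d4 + t^5•d5 = 0) :
    d0 = 0 ∧ d1 = 0 ∧ d2 = 0 ∧ d3 = 0 ∧ d4 = 0 ∧ d5 = 0 := by
  have key : ∀ (f : Module.Dual k A),
      (C (f d0) + C (f d1) * X + C (f d2) * X^2 + C (f d3) * X^3 + C (f d4) * X^4
        + C (f d5) * X^5) = 0 := by
    intro f
    apply Polynomial.zero_of_eval_zero
    intro t
    have h2 := congrArg f (h t)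
    simp only [map_add, map_smul, smul_eq_mul, map_zero] at h2
    simp only [eval_add, eval_mul, eval_pow, eval_C, eval_X]
    linear_combination h2
  have hz : ∀ (x : A) (i : ℕ), (∀ f : Module.Dual k A,
      f x = (C (f d0) + C (f d1) * X + C (f d2) * X^2 + C (f d3) * X^3 + C (f d4) * X^4
        + C (f d5) * X^5).coeff i) → x = 0 := by
    intro x i hx
    rw [← Module.forall_dual_apply_eq_zero_iff k x]
    intro f; rw [hx f, key f]; simp
  refine ⟨hz d0 0 ?_, hz d1 1 ?_, hz d2 2 ?_, hz d3 3 ?_, hz d4 4 ?_, hz d5 5 ?_⟩ <;>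
    intro f <;> simp [coeff_add, coeff_C_mul, coeff_X_pow]

lemma triPieces {W : Type*} [AddCommGroup W] [Module k W]
    {f : A → A → A → W} (h : IsTriSkew k f) :
    (∀ a a' b c, f (a + a') b c = f a b c + f a' b c) ∧
    (∀ (t : k) (a b c), f (t • a) b c = t • f a b c) ∧
    (∀ a b b' c, f a (b + b') c = f a b c + f a b' c) ∧
    (∀ (t : k) (a b c), f a (t • b) c = t • f a b c) ∧
    (∀ a b c c', f a b (c + c') = f a b c + f a b c') ∧
    (∀ (t : k) (a b c), f a b (t • c) = t • f a b c) := by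
  obtain ⟨h1, h2, h3, -, -⟩ := h
  have z1 : ∀ b c, f 0 b c = 0 := by
    intro b c; have := h1 1 0 0 b c; simpa using this.symm
  have z2 : ∀ a c, f a 0 c = 0 := by
    intro a c; have := h2 1 a 0 0 c; simpa using this.symm
  have z3 : ∀ a b, f a b 0 = 0 := by
    intro a b; have := h3 1 a b 0 0; simpa using this.symm
  refine ⟨fun a a' b c => ?_, fun t a b c => ?_, fun a b b' c => ?_,
    fun t a b c => ?_, fun a b c c' => ?_, fun t a b c => ?_⟩
  · have := h1 1 a a' b c; simpa using this
  · have := h1 t a 0 b c; simpa [z1] using this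
  · have := h2 1 a b b' c; simpa using this
  · have := h2 t a b 0 c; simpa [z2] using this
  · have := h3 1 a b c c'; simpa using this
  · have := h3 t a b c 0; simpa [z3] using this

end Helpers

/-- if `N` is a Nijenhuis operator on the modified `λ`-differential 3-Lie
algebra `(A, br, d)`, then `(A, [-,-,-]_N, d)` is again a modified `λ`-differential
3-Lie algebra. -/
theorem stmt12 {k A : Type*} [Field k] [CharZero k] [AddCommGroup A] [Module k A]
    (br : A → A → A → A) (lam : k) (d : A →ₗ[k] A)
    (h3 : Is3LieBr k br) (hd : IsMDiffOn k br lam ⇑d)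
    (N : A →ₗ[k] A) (hN : IsNijenhuisOn (k := k) br ⇑d ⇑N) :
    Is3LieBr k (nijBr br N) ∧ IsMDiffOn k (nijBr br N) lam ⇑d := by
  obtain ⟨hts, hF⟩ := h3
  obtain ⟨hN1, hN2⟩ := hN
  have hdd : ∀ a b c : A, d (br a b c) =
      br (d a) b c + br a (d b) c + br a b (d c) + lam • br a b c := hd
  obtain ⟨madd1, msmul1, madd2, msmul2, madd3, msmul3⟩ := triPieces hts
  obtain ⟨hl1, hl2, hl3, hs12, hs23⟩ := hts
  refine ⟨⟨⟨?_, ?_, ?_, ?_, ?_⟩, ?_⟩, ?_⟩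
  · intro t a a' b c
    simp only [nijBr, map_add, map_smul, madd1, msmul1, madd2, msmul2, madd3, msmul3]
    module
  · intro t a b b' c
    simp only [nijBr, map_add, map_smul, madd1, msmul1, madd2, msmul2, madd3, msmul3]
    module
  · intro t a b c c'
    simp only [nijBr, map_add, map_smul, madd1, msmul1, madd2, msmul2, madd3, msmul3]
    module
  · intro a b c
    simp only [nijBr, map_add, map_sub]
    rw [hs12 b (N a) (N c), hs12 (N b) a (N c), hs12 (N b) (N a) c, hs12 (N b) a c,
      hs12 b (N a) c, hs12 b a (N c), hs12 b a c]
    simp only [map_neg]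
    module
  · intro a b c
    simp only [nijBr, map_add, map_sub]
    rw [hs23 a (N c) (N b), hs23 (N a) c (N b), hs23 (N a) (N c) b, hs23 (N a) c b,
      hs23 a (N c) b, hs23 a c (N b), hs23 a c b]
    simp only [map_neg]
    module
  · -- Filippov identity for the deformed bracket
    intro a1 a2 a3 a4 a5
    obtain ⟨σ, hσdef⟩ : ∃ σ : A → A → A → A, σ = nijBr br N := ⟨_, rfl⟩
    rw [show nijBr br N = σ from hσdef.symm]
    obtain ⟨ρ, hρdef⟩ : ∃ ρ : A → A → A → A, ρ = fun a b c =>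
      br (N a) b c + br a (N b) c + br a b (N c) - N (br a b c) := ⟨_, rfl⟩
    have star : ∀ a b c, N (σ a b c) = br (N a) (N b) (N c) := by
      intro a b c
      rw [hσdef]
      simp only [nijBr, map_add, map_sub]
      rw [hN2 a b c]
      simp only [map_add, map_sub]
    have ρadd1 : ∀ x x' y z, ρ (x + x') y z = ρ x y z + ρ x' y z := by
      intro x x' y z; rw [hρdef]; simp only [map_add, madd1, madd2, madd3]; abel
    have ρadd2 : ∀ x y y' z, ρ x (y + y') z = ρ x y z + ρ x y' z := by
      intro x y y' z; rw [hρdef]; simp only [map_add, madd1, madd2, madd3]; abel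
    have ρadd3 : ∀ x y z z', ρ x y (z + z') = ρ x y z + ρ x y z' := by
      intro x y z z'; rw [hρdef]; simp only [map_add, madd1, madd2, madd3]; abel
    have ρsmul1 : ∀ (s : k) x y z, ρ (s • x) y z = s • ρ x y z := by
      intro s x y z; rw [hρdef]; simp only [map_smul, msmul1, msmul2, msmul3]; module
    have ρsmul2 : ∀ (s : k) x y z, ρ x (s • y) z = s • ρ x y z := by
      intro s x y z; rw [hρdef]; simp only [map_smul, msmul1, msmul2, msmul3]; module
    have ρsmul3 : ∀ (s : k) x y z, ρ x y (s • z) = s • ρ x y z := by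
      intro s x y z; rw [hρdef]; simp only [map_smul, msmul1, msmul2, msmul3]; module
    have σadd1 : ∀ x x' y z, σ (x + x') y z = σ x y z + σ x' y z := by
      intro x x' y z; rw [hσdef]
      simp only [nijBr, map_add, madd1, madd2, madd3]; abel
    have σadd2 : ∀ x y y' z, σ x (y + y') z = σ x y z + σ x y' z := by
      intro x y y' z; rw [hσdef]
      simp only [nijBr, map_add, madd1, madd2, madd3]; abel
    have σadd3 : ∀ x y z z', σ x y (z + z') = σ x y z + σ x y z' := by
      intro x y z z'; rw [hσdef]
      simp only [nijBr, map_add, madd1, madd2, madd3]; abel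
    have σsmul1 : ∀ (s : k) x y z, σ (s • x) y z = s • σ x y z := by
      intro s x y z; rw [hσdef]
      simp only [nijBr, map_add, map_smul, msmul1, msmul2, msmul3]; module
    have σsmul2 : ∀ (s : k) x y z, σ x (s • y) z = s • σ x y z := by
      intro s x y z; rw [hσdef]
      simp only [nijBr, map_add, map_smul, msmul1, msmul2, msmul3]; module
    have σsmul3 : ∀ (s : k) x y z, σ x y (s • z) = s • σ x y z := by
      intro s x y z; rw [hσdef]
      simp only [nijBr, map_add, map_smul, msmul1, msmul2, msmul3]; module
    obtain ⟨ν, hνdef⟩ : ∃ ν : k → A → A → A → A, ν = fun t a b c =>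
      br a b c + t • ρ a b c + t ^ 2 • σ a b c := ⟨_, rfl⟩
    have K : ∀ (t : k) a b c, ν t a b c + t • N (ν t a b c) =
        br (a + t • N a) (b + t • N b) (c + t • N c) := by
      intro t a b c
      rw [hνdef]
      simp only [map_add, map_smul]
      rw [star a b c, hρdef, hσdef]
      simp only [nijBr, map_add, map_sub, madd1, msmul1, madd2, msmul2, madd3, msmul3]
      module
    have νadd1 : ∀ (t : k) x x' y z, ν t (x + x') y z = ν t x y z + ν t x' y z := by
      intro t x x' y z; rw [hνdef]; simp only [madd1, ρadd1, σadd1]; module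
    have νadd2 : ∀ (t : k) x y y' z, ν t x (y + y') z = ν t x y z + ν t x y' z := by
      intro t x y y' z; rw [hνdef]; simp only [madd2, ρadd2, σadd2]; module
    have νadd3 : ∀ (t : k) x y z z', ν t x y (z + z') = ν t x y z + ν t x y z' := by
      intro t x y z z'; rw [hνdef]; simp only [madd3, ρadd3, σadd3]; module
    have νsmul1 : ∀ (t s : k) x y z, ν t (s • x) y z = s • ν t x y z := by
      intro t s x y z; rw [hνdef]; simp only [msmul1, ρsmul1, σsmul1]; module
    have νsmul2 : ∀ (t s : k) x y z, ν t x (s • y) z = s • ν t x y z := by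
      intro t s x y z; rw [hνdef]; simp only [msmul2, ρsmul2, σsmul2]; module
    have νsmul3 : ∀ (t s : k) x y z, ν t x y (s • z) = s • ν t x y z := by
      intro t s x y z; rw [hνdef]; simp only [msmul3, ρsmul3, σsmul3]; module
    have ννr : ∀ (t : k) x y z u v, ν t x y (ν t z u v) =
        br x y (br z u v)
          + t • (ρ x y (br z u v) + br x y (ρ z u v))
          + t ^ 2 • (σ x y (br z u v) + ρ x y (ρ z u v) + br x y (σ z u v))
          + t ^ 3 • (σ x y (ρ z u v) + ρ x y (σ z u v))
          + t ^ 4 • σ x y (σ z u v) := by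
      intro t x y z u v
      conv_lhs => rw [hνdef]
      simp only [madd3, msmul3, ρadd3, ρsmul3, σadd3, σsmul3]
      module
    have ννl : ∀ (t : k) z u v x y, ν t (ν t z u v) x y =
        br (br z u v) x y
          + t • (ρ (br z u v) x y + br (ρ z u v) x y)
          + t ^ 2 • (σ (br z u v) x y + ρ (ρ z u v) x y + br (σ z u v) x y)
          + t ^ 3 • (σ (ρ z u v) x y + ρ (σ z u v) x y)
          + t ^ 4 • σ (σ z u v) x y := by
      intro t z u v x y
      conv_lhs => rw [hνdef]
      simp only [madd1, msmul1, ρadd1, ρsmul1, σadd1, σsmul1]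
      module
    have ννm : ∀ (t : k) x z u v y, ν t x (ν t z u v) y =
        br x (br z u v) y
          + t • (ρ x (br z u v) y + br x (ρ z u v) y)
          + t ^ 2 • (σ x (br z u v) y + ρ x (ρ z u v) y + br x (σ z u v) y)
          + t ^ 3 • (σ x (ρ z u v) y + ρ x (σ z u v) y)
          + t ^ 4 • σ x (σ z u v) y := by
      intro t x z u v y
      conv_lhs => rw [hνdef]
      simp only [madd2, msmul2, ρadd2, ρsmul2, σadd2, σsmul2]
      module
    obtain ⟨Df, hDf⟩ : ∃ Df : (A → A → A → A) → (A → A → A → A) → A, Df = fun X Y =>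
      X a1 a2 (Y a3 a4 a5) - X (Y a1 a2 a3) a4 a5 - X a3 (Y a1 a2 a4) a5
        - X a3 a4 (Y a1 a2 a5) := ⟨_, rfl⟩
    have hE : ∀ t : k,
        ν t a1 a2 (ν t a3 a4 a5) - ν t (ν t a1 a2 a3) a4 a5
          - ν t a3 (ν t a1 a2 a4) a5 - ν t a3 a4 (ν t a1 a2 a5)
        = Df br br + t • (Df ρ br + Df br ρ)
            + t ^ 2 • (Df σ br + Df ρ ρ + Df br σ)
            + t ^ 3 • (Df σ ρ + Df ρ σ) + t ^ 4 • Df σ σ := by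
      intro t
      rw [ννr t a1 a2 a3 a4 a5, ννl t a1 a2 a3 a4 a5, ννm t a3 a1 a2 a4 a5,
        ννr t a3 a4 a1 a2 a5, hDf]
      simp only []
      module
    have hphi : ∀ t : k,
        (ν t a1 a2 (ν t a3 a4 a5) - ν t (ν t a1 a2 a3) a4 a5
          - ν t a3 (ν t a1 a2 a4) a5 - ν t a3 a4 (ν t a1 a2 a5))
        + t • N (ν t a1 a2 (ν t a3 a4 a5) - ν t (ν t a1 a2 a3) a4 a5
          - ν t a3 (ν t a1 a2 a4) a5 - ν t a3 a4 (ν t a1 a2 a5)) = 0 := by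
      intro t
      have k1 : ν t a1 a2 (ν t a3 a4 a5) + t • N (ν t a1 a2 (ν t a3 a4 a5)) =
          br (a1 + t • N a1) (a2 + t • N a2)
            (br (a3 + t • N a3) (a4 + t • N a4) (a5 + t • N a5)) := by
        rw [K t a1 a2 (ν t a3 a4 a5), K t a3 a4 a5]
      have k2 : ν t (ν t a1 a2 a3) a4 a5 + t • N (ν t (ν t a1 a2 a3) a4 a5) =
          br (br (a1 + t • N a1) (a2 + t • N a2) (a3 + t • N a3))
            (a4 + t • N a4) (a5 + t • N a5) := by
        rw [K t (ν t a1 a2 a3) a4 a5, K t a1 a2 a3]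
      have k3 : ν t a3 (ν t a1 a2 a4) a5 + t • N (ν t a3 (ν t a1 a2 a4) a5) =
          br (a3 + t • N a3)
            (br (a1 + t • N a1) (a2 + t • N a2) (a4 + t • N a4)) (a5 + t • N a5) := by
        rw [K t a3 (ν t a1 a2 a4) a5, K t a1 a2 a4]
      have k4 : ν t a3 a4 (ν t a1 a2 a5) + t • N (ν t a3 a4 (ν t a1 a2 a5)) =
          br (a3 + t • N a3) (a4 + t • N a4)
            (br (a1 + t • N a1) (a2 + t • N a2) (a5 + t • N a5)) := by
        rw [K t a3 a4 (ν t a1 a2 a5), K t a1 a2 a5]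
      have expand : (ν t a1 a2 (ν t a3 a4 a5) - ν t (ν t a1 a2 a3) a4 a5
          - ν t a3 (ν t a1 a2 a4) a5 - ν t a3 a4 (ν t a1 a2 a5))
        + t • N (ν t a1 a2 (ν t a3 a4 a5) - ν t (ν t a1 a2 a3) a4 a5
          - ν t a3 (ν t a1 a2 a4) a5 - ν t a3 a4 (ν t a1 a2 a5))
        = (ν t a1 a2 (ν t a3 a4 a5) + t • N (ν t a1 a2 (ν t a3 a4 a5)))
          - (ν t (ν t a1 a2 a3) a4 a5 + t • N (ν t (ν t a1 a2 a3) a4 a5))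
          - (ν t a3 (ν t a1 a2 a4) a5 + t • N (ν t a3 (ν t a1 a2 a4) a5))
          - (ν t a3 a4 (ν t a1 a2 a5) + t • N (ν t a3 a4 (ν t a1 a2 a5))) := by
        simp only [map_add, map_sub, smul_sub]
        abel
      rw [expand, k1, k2, k3, k4,
        hF (a1 + t • N a1) (a2 + t • N a2) (a3 + t • N a3) (a4 + t • N a4) (a5 + t • N a5)]
      abel
    have hpoly : ∀ t : k,
        Df br br + t • ((Df ρ br + Df br ρ) + N (Df br br))
          + t ^ 2 • ((Df σ br + Df ρ ρ + Df br σ) + N (Df ρ br + Df br ρ))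
          + t ^ 3 • ((Df σ ρ + Df ρ σ) + N (Df σ br + Df ρ ρ + Df br σ))
          + t ^ 4 • (Df σ σ + N (Df σ ρ + Df ρ σ))
          + t ^ 5 • N (Df σ σ) = 0 := by
      intro t
      have h1 := hphi t
      rw [hE t] at h1
      calc Df br br + t • ((Df ρ br + Df br ρ) + N (Df br br))
          + t ^ 2 • ((Df σ br + Df ρ ρ + Df br σ) + N (Df ρ br + Df br ρ))
          + t ^ 3 • ((Df σ ρ + Df ρ σ) + N (Df σ br + Df ρ ρ + Df br σ))
          + t ^ 4 • (Df σ σ + N (Df σ ρ + Df ρ σ))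
          + t ^ 5 • N (Df σ σ)
          = (Df br br + t • (Df ρ br + Df br ρ)
              + t ^ 2 • (Df σ br + Df ρ ρ + Df br σ)
              + t ^ 3 • (Df σ ρ + Df ρ σ) + t ^ 4 • Df σ σ)
            + t • N (Df br br + t • (Df ρ br + Df br ρ)
              + t ^ 2 • (Df σ br + Df ρ ρ + Df br σ)
              + t ^ 3 • (Df σ ρ + Df ρ σ) + t ^ 4 • Df σ σ) := by
            simp only [map_add, map_smul]
            module
        _ = 0 := h1
    obtain ⟨e0, e1, e2, e3, e4, -⟩ := poly6 _ _ _ _ _ _ hpoly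
    have g0 : Df br br = 0 := e0
    have g1 : Df ρ br + Df br ρ = 0 := by
      rw [g0, map_zero, add_zero] at e1; exact e1
    have g2 : Df σ br + Df ρ ρ + Df br σ = 0 := by
      rw [g1, map_zero, add_zero] at e2; exact e2
    have g3 : Df σ ρ + Df ρ σ = 0 := by
      rw [g2, map_zero, add_zero] at e3; exact e3
    have g4 : Df σ σ = 0 := by
      rw [g3, map_zero, add_zero] at e4; exact e4
    rw [hDf] at g4
    simp only [] at g4
    calc σ a1 a2 (σ a3 a4 a5)
        = (σ a1 a2 (σ a3 a4 a5) - σ (σ a1 a2 a3) a4 a5 - σ a3 (σ a1 a2 a4) a5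
            - σ a3 a4 (σ a1 a2 a5))
          + (σ (σ a1 a2 a3) a4 a5 + σ a3 (σ a1 a2 a4) a5 + σ a3 a4 (σ a1 a2 a5)) := by
          abel
      _ = σ (σ a1 a2 a3) a4 a5 + σ a3 (σ a1 a2 a4) a5 + σ a3 a4 (σ a1 a2 a5) := by
          rw [g4]; abel
  · intro a b c
    simp only [nijBr, map_add, map_sub, map_smul, hdd, ← hN1]
    module
end

section
/- Let (M;ρ,d_M) be a representation of a modified λ-differential 3-Lie algebra (A,[-,-,-],d), and let f : A×A×A → M be a trilinear skew-symmetric map and g : A → M a linear map. Define on A⊕M the bracket [a1+u1,a2+u2,a3+u3]_{ρf} = [a1,a2,a3] + ρ(a2,a3)u1 + ρ(a3,a1)u2 + ρ(a1,a2)u3 + f(a1,a2,a3) and the linear map d_g(a+u) = d(a) + d_M(u) + g(a). Then (A⊕M, [-,-,-]_{ρf}, d_g) is a modified λ-differential 3-Lie algebra if and only if (f,g) is a 2-cocycle, i.e. for all a1,...,a5 ∈ A: ρ(a4,a5)f(a1,a2,a3) + f([a1,a2,a3],a4,a5) + ρ(a5,a3)f(a1,a2,a4) + f(a3,[a1,a2,a4],a5)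 + ρ(a3,a4)f(a1,a2,a5) + f(a3,a4,[a1,a2,a5]) - ρ(a1,a2)f(a3,a4,a5) - f(a1,a2,[a3,a4,a5]) = 0, and for all a1,a2,a3 ∈ A: ρ(a2,a3)g(a1) + f(d(a1),a2,a3) + ρ(a3,a1)g(a2) + f(a1,d(a2),a3) + ρ(a1,a2)g(a3) + f(a1,a2,d(a3)) + λf(a1,a2,a3) - d_M(f(a1,a2,a3)) - g([a1,a2,a3]) = 0. -/
open Finset

/-- for a representation `(M, ρ, dM)` of a modified `λ`-differential 3-Lie
algebra `(A, br, d)`, a trilinear skew-symmetric `f : A³ → M` and a linear `g : A → M`,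
the twisted structure `(A ⊕ M, [-,-,-]_{ρf}, d_g)` is a modified `λ`-differential 3-Lie
algebra iff `(f, g)` is a 2-cocycle. -/
theorem stmt14 {k A M : Type*} [Field k] [CharZero k] [AddCommGroup A] [Module k A]
    [AddCommGroup M] [Module k M]
    (br : A → A → A → A) (lam : k) (d : A →ₗ[k] A)
    (h3 : Is3LieBr k br) (hd : IsMDiffOn k br lam ⇑d)
    (ρ : A → A → M →ₗ[k] M) (hρ : Is3LieRep k br ρ) (dM : M →ₗ[k] M)
    (hdM : IsMDiffRep k ρ lam ⇑d ⇑dM)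
    (f : A → A → A → M) (hf : IsTriSkew k f) (g : A →ₗ[k] M) :
    (Is3LieBr k (fun x y z : A × M =>
        ((br x.1 y.1 z.1 : A),
          (ρ y.1 z.1 x.2 + ρ z.1 x.1 y.2 + ρ x.1 y.1 z.2 + f x.1 y.1 z.1 : M))) ∧
      IsMDiffOn k (fun x y z : A × M =>
        ((br x.1 y.1 z.1 : A),
          (ρ y.1 z.1 x.2 + ρ z.1 x.1 y.2 + ρ x.1 y.1 z.2 + f x.1 y.1 z.1 : M)))
        lam (fun x : A × M => ((d x.1 : A), (dM x.2 + g x.1 : M)))) ↔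
    ((∀ a1 a2 a3 a4 a5 : A,
        ρ a4 a5 (f a1 a2 a3) + f (br a1 a2 a3) a4 a5 +
          ρ a5 a3 (f a1 a2 a4) + f a3 (br a1 a2 a4) a5 +
            ρ a3 a4 (f a1 a2 a5) + f a3 a4 (br a1 a2 a5) -
              ρ a1 a2 (f a3 a4 a5) - f a1 a2 (br a3 a4 a5) = 0) ∧
      (∀ a1 a2 a3 : A,
        ρ a2 a3 (g a1) + f (d a1) a2 a3 + ρ a3 a1 (g a2) + f a1 (d a2) a3 +
          ρ a1 a2 (g a3) + f a1 a2 (d a3) + lam • f a1 a2 a3 -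
            dM (f a1 a2 a3) - g (br a1 a2 a3) = 0)) := by
  obtain ⟨⟨hb1, hb2, hb3, hb12, hb23⟩, hFilA⟩ := h3
  obtain ⟨hρ1, hρ2, hρsk, hρ4, hρ5⟩ := hρ
  obtain ⟨hf1, hf2, hf3, hf12, hf23⟩ := hf
  have hρ1' : ∀ (t : k) (a a' b : A) (v : M),
      ρ (t • a + a') b v = t • ρ a b v + ρ a' b v := by
    intro t a a' b v; rw [hρ1]; simp
  have hρ2' : ∀ (t : k) (a b b' : A) (v : M),
      ρ a (t • b + b') v = t • ρ a b v + ρ a b' v := by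
    intro t a b b' v; rw [hρ2]; simp
  have hρsk' : ∀ (a b : A) (v : M), ρ a b v = - ρ b a v := by
    intro a b v; rw [hρsk]; simp
  have hρ4' : ∀ (a1 a2 a3 a4 : A) (v : M), ρ (br a1 a2 a3) a4 v =
      ρ a2 a3 (ρ a1 a4 v) + ρ a3 a1 (ρ a2 a4 v) + ρ a1 a2 (ρ a3 a4 v) := by
    intro a1 a2 a3 a4 v; rw [hρ4]; simp
  have hρ5' : ∀ (a1 a2 a3 a4 : A) (v : M), ρ a1 a2 (ρ a3 a4 v) =
      ρ a3 a4 (ρ a1 a2 v) + ρ (br a1 a2 a3) a4 v + ρ a3 (br a1 a2 a4) v := by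
    intro a1 a2 a3 a4 v
    have := congrArg (fun L : M →ₗ[k] M => L v) (hρ5 a1 a2 a3 a4)
    simpa using this
  have L1 : ∀ (a2 a3 a4 a5 : A) (v : M), ρ a2 (br a3 a4 a5) v =
      ρ a4 a5 (ρ a2 a3 v) + ρ a5 a3 (ρ a2 a4 v) + ρ a3 a4 (ρ a2 a5 v) := by
    intro a2 a3 a4 a5 v
    rw [hρsk' a2 (br a3 a4 a5) v, hρ4' a3 a4 a5 a2 v,
        hρsk' a3 a2 v, hρsk' a4 a2 v, hρsk' a5 a2 v]
    simp only [map_neg]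
    abel
  constructor
  · rintro ⟨⟨-, hFil⟩, hD⟩
    constructor
    · intro a1 a2 a3 a4 a5
      have h := congrArg Prod.snd
        (hFil (a1, 0) (a2, 0) (a3, 0) (a4, 0) (a5, 0))
      simp only [Prod.snd_add, map_zero, zero_add, add_zero] at h
      linear_combination (norm := module) - h
    · intro a1 a2 a3
      have h := congrArg Prod.snd (hD (a1, 0) (a2, 0) (a3, 0))
      simp only [Prod.snd_add, Prod.smul_snd, map_zero, zero_add, add_zero,
        smul_zero, map_add] at h
      linear_combination (norm := module) - h
  · rintro ⟨hc1, hc2⟩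
    refine ⟨⟨⟨?_, ?_, ?_, ?_, ?_⟩, ?_⟩, ?_⟩
    · rintro t ⟨a1, u1⟩ ⟨a1', u1'⟩ ⟨a2, u2⟩ ⟨a3, u3⟩
      rw [Prod.ext_iff]
      constructor
      · simp only [Prod.fst_add, Prod.smul_fst]
        exact hb1 t a1 a1' a2 a3
      · simp only [Prod.fst_add, Prod.smul_fst, Prod.snd_add, Prod.smul_snd,
          map_add, map_smul]
        linear_combination (norm := module) hρ2' t a3 a1 a1' u2 +
          hρ1' t a1 a1' a2 u3 + hf1 t a1 a1' a2 a3
    · rintro t ⟨a1, u1⟩ ⟨a2, u2⟩ ⟨a2', u2'⟩ ⟨a3, u3⟩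
      rw [Prod.ext_iff]
      constructor
      · simp only [Prod.fst_add, Prod.smul_fst]
        exact hb2 t a1 a2 a2' a3
      · simp only [Prod.fst_add, Prod.smul_fst, Prod.snd_add, Prod.smul_snd,
          map_add, map_smul]
        linear_combination (norm := module) hρ1' t a2 a2' a3 u1 +
          hρ2' t a1 a2 a2' u3 + hf2 t a1 a2 a2' a3
    · rintro t ⟨a1, u1⟩ ⟨a2, u2⟩ ⟨a3, u3⟩ ⟨a3', u3'⟩
      rw [Prod.ext_iff]
      constructor
      · simp only [Prod.fst_add, Prod.smul_fst]
        exact hb3 t a1 a2 a3 a3'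
      · simp only [Prod.fst_add, Prod.smul_fst, Prod.snd_add, Prod.smul_snd,
          map_add, map_smul]
        linear_combination (norm := module) hρ2' t a2 a3 a3' u1 +
          hρ1' t a3 a3' a1 u2 + hf3 t a1 a2 a3 a3'
    · rintro ⟨a1, u1⟩ ⟨a2, u2⟩ ⟨a3, u3⟩
      rw [Prod.ext_iff]
      constructor
      · simp only [Prod.fst_neg]
        exact hb12 a1 a2 a3
      · simp only [Prod.snd_neg]
        linear_combination (norm := module) hρsk' a2 a3 u1 + hρsk' a3 a1 u2 +
          hρsk' a1 a2 u3 + hf12 a1 a2 a3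
    · rintro ⟨a1, u1⟩ ⟨a2, u2⟩ ⟨a3, u3⟩
      rw [Prod.ext_iff]
      constructor
      · simp only [Prod.fst_neg]
        exact hb23 a1 a2 a3
      · simp only [Prod.snd_neg]
        linear_combination (norm := module) hρsk' a2 a3 u1 + hρsk' a3 a1 u2 +
          hρsk' a1 a2 u3 + hf23 a1 a2 a3
    · rintro ⟨a1, u1⟩ ⟨a2, u2⟩ ⟨a3, u3⟩ ⟨a4, u4⟩ ⟨a5, u5⟩
      rw [Prod.ext_iff]
      constructor
      · simp only [Prod.fst_add]
        exact hFilA a1 a2 a3 a4 a5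
      · simp only [Prod.snd_add, map_add]
        linear_combination (norm := module) L1 a2 a3 a4 a5 u1 +
          hρ4' a3 a4 a5 a1 u2 + hρ5' a1 a2 a4 a5 u3 + hρ5' a1 a2 a5 a3 u4 +
          hρ5' a1 a2 a3 a4 u5 - hc1 a1 a2 a3 a4 a5
    · rintro ⟨a1, u1⟩ ⟨a2, u2⟩ ⟨a3, u3⟩
      rw [Prod.ext_iff]
      constructor
      · simp only [Prod.fst_add, Prod.smul_fst]
        exact hd a1 a2 a3
      · simp only [Prod.snd_add, Prod.smul_snd, map_add, smul_add]
        linear_combination (norm := module) hdM a2 a3 u1 + hdM a3 a1 u2 +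
          hdM a1 a2 u3 - hc2 a1 a2 a3
end

section
/- Let 0 → (M,d_M) →^i (Â,[-,-,-]_Â,d̂) →^p (A,[-,-,-],d) → 0 be an abelian extension of modified λ-differential 3-Lie algebras (so i,p are homomorphisms of modified λ-differential 3-Lie algebras, the sequence is exact, and [x,u,v]_Â = 0 whenever u,v ∈ i(M)), and let s : A → Â be a section, i.e. a linear map with p∘s = id_A. Identify M with i(M). Then the map ϱ : A×A → End(M) defined by ϱ(a1,a2)u = [s(a1),s(a2),u]_Â is well-defined (takes values in M, and is independent of the choice of s), and (M; ϱ, d_M) is a representation of the modified λ-differential 3-Lie algebra (A,[-,-,-],d). -/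
open Finset

theorem adjointId {k V : Type*} [Field k] [AddCommGroup V] [Module k V]
    (br : V → V → V → V) (h : Is3LieBr k br) (x1 x2 x3 x4 x5 : V) :
    br (br x1 x2 x3) x4 x5 =
      br x2 x3 (br x1 x4 x5) + br x3 x1 (br x2 x4 x5) + br x1 x2 (br x3 x4 x5) := by
  obtain ⟨⟨hl1, hl2, hl3, hsw12, hsw23⟩, hF⟩ := h
  have hzero3 : ∀ a b : V, br a b (0:V) = 0 := by
    intro a b
    have h := hl3 1 a b 0 0
    simp only [one_smul, add_zero] at h
    have h2 : br a b 0 + br a b 0 = br a b 0 + 0 := by rw [add_zero]; exact h.symm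
    exact add_left_cancel h2
  have hneg3 : ∀ a b c : V, br a b (-c) = - br a b c := by
    intro a b c
    have h := hl3 (-1) a b c 0
    simp only [neg_one_smul, add_zero, hzero3] at h
    exact h
  have hcyc : ∀ a b c : V, br a b c = br c a b := by
    intro a b c
    rw [hsw23 a b c, hsw12 a c b, neg_neg]
  have hcyc' : ∀ a b c : V, br a b c = br b c a := by
    intro a b c
    rw [hcyc a b c, hcyc c a b]
  have h1 := hF x1 x2 x3 x4 x5
  rw [hcyc' (br x1 x2 x3) x4 x5] at h1
  rw [hcyc x3 (br x1 x2 x4) x5] at h1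
  rw [hsw12 x5 x3 (br x1 x2 x4)] at h1
  have h2 := hF x1 x3 x2 x4 x5
  rw [hcyc' (br x1 x3 x2) x4 x5] at h2
  rw [hsw23 x1 x3 x2] at h2
  rw [hneg3 x4 x5 (br x1 x2 x3)] at h2
  rw [hcyc x2 (br x1 x3 x4) x5] at h2
  rw [hsw12 x5 x2 (br x1 x3 x4)] at h2
  have h3 := hF x1 x4 x2 x3 x5
  rw [hcyc' (br x1 x4 x2) x3 x5] at h3
  rw [hsw23 x1 x4 x2] at h3
  rw [hneg3 x3 x5 (br x1 x2 x4)] at h3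
  rw [hcyc x2 (br x1 x4 x3) x5] at h3
  rw [hsw23 x1 x4 x3] at h3
  rw [hneg3 x5 x2 (br x1 x3 x4)] at h3
  rw [hsw12 x5 x2 (br x1 x3 x4)] at h3
  have h4 := hF x1 x5 x2 x3 x4
  rw [hcyc' (br x1 x5 x2) x3 x4] at h4
  rw [hsw23 x1 x5 x2] at h4
  rw [hneg3 x3 x4 (br x1 x2 x5)] at h4
  rw [hcyc x2 (br x1 x5 x3) x4] at h4
  rw [hsw23 x1 x5 x3] at h4
  rw [hneg3 x4 x2 (br x1 x3 x5)] at h4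
  rw [hsw12 x4 x2 (br x1 x3 x5)] at h4
  rw [hsw23 x1 x5 x4] at h4
  rw [hneg3 x2 x3 (br x1 x4 x5)] at h4
  have h5 := hF x2 x3 x1 x4 x5
  rw [hcyc' (br x2 x3 x1) x4 x5] at h5
  rw [hcyc x2 x3 x1] at h5
  rw [hcyc x1 (br x2 x3 x4) x5] at h5
  rw [hsw12 x5 x1 (br x2 x3 x4)] at h5
  rw [hcyc' (br x1 x2 x3) x4 x5]
  rw [hsw12 x3 x1 (br x2 x4 x5)]
  linear_combination (norm := abel) h2 + h3 + h5 - h1 - h4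


/-- given an abelian extension
`0 → (M, dM) → (Â, brh, dh) → (A, br, d) → 0` of modified `λ`-differential 3-Lie
algebras and a section `s` of `p`, the map `ϱ(a1,a2)u = [s a1, s a2, u]_Â` is a
well-defined map into `M`, is independent of the choice of section, and makes
`(M, ϱ, dM)` a representation of `(A, br, d)`. -/
theorem stmt15 {k A M Ahat : Type*} [Field k] [CharZero k]
    [AddCommGroup A] [Module k A] [AddCommGroup M] [Module k M]
    [AddCommGroup Ahat] [Module k Ahat]
    (br : A → A → A → A) (lam : k) (d : A →ₗ[k] A)
    (h3 : Is3LieBr k br) (hd : IsMDiffOn k br lam ⇑d)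
    (brh : Ahat → Ahat → Ahat → Ahat) (dh : Ahat →ₗ[k] Ahat)
    (h3h : Is3LieBr k brh) (hdh : IsMDiffOn k brh lam ⇑dh)
    (dM : M →ₗ[k] M)
    (i : M →ₗ[k] Ahat) (p : Ahat →ₗ[k] A)
    (hi : Function.Injective i) (hp : Function.Surjective p)
    (hexact : ∀ x : Ahat, p x = 0 ↔ x ∈ Set.range i)
    (hihom : ∀ u : M, i (dM u) = dh (i u))
    (hphombr : ∀ x y z : Ahat, p (brh x y z) = br (p x) (p y) (p z))
    (hphomd : ∀ x : Ahat, p (dh x) = d (p x))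
    (habelian : ∀ (x : Ahat) (u v : M), brh x (i u) (i v) = 0)
    (s : A →ₗ[k] Ahat) (hs : ∀ a : A, p (s a) = a)
    (ϱ : A → A → M →ₗ[k] M)
    (hϱ : ∀ (a1 a2 : A) (u : M), i (ϱ a1 a2 u) = brh (s a1) (s a2) (i u)) :
    (∀ (a1 a2 : A) (u : M), ∃ m : M, i m = brh (s a1) (s a2) (i u)) ∧
      (∀ s' : A →ₗ[k] Ahat, (∀ a : A, p (s' a) = a) →
        ∀ (a1 a2 : A) (u : M), brh (s' a1) (s' a2) (i u) = brh (s a1) (s a2) (i u)) ∧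
      Is3LieRep k br ϱ ∧ IsMDiffRep k ϱ lam ⇑d ⇑dM := by
  obtain ⟨⟨hl1, hl2, hl3, hsw12, hsw23⟩, hF⟩ := id h3h
  have hadd1 : ∀ a a' b c : Ahat, brh (a + a') b c = brh a b c + brh a' b c := by
    intro a a' b c
    have h := hl1 1 a a' b c
    simpa using h
  have hadd2 : ∀ a b b' c : Ahat, brh a (b + b') c = brh a b c + brh a b' c := by
    intro a b b' c
    have h := hl2 1 a b b' c
    simpa using h
  have hab2 : ∀ (x : Ahat) (u v : M), brh (i u) x (i v) = 0 := by
    intro x u v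
    rw [hsw12, habelian, neg_zero]
  have hker : ∀ x y : Ahat, p x = p y → ∃ m : M, y = x + i m := by
    intro x y hxy
    obtain ⟨m, hm⟩ := (hexact (y - x)).mp (by rw [map_sub, hxy, sub_self])
    exact ⟨m, by rw [hm]; abel⟩
  have idiff : ∀ a1 a2 a3 : A, ∃ m : M,
      brh (s a1) (s a2) (s a3) = s (br a1 a2 a3) + i m := by
    intro a1 a2 a3
    apply hker
    rw [hs, hphombr, hs, hs, hs]
  refine ⟨fun a1 a2 u => ⟨ϱ a1 a2 u, hϱ a1 a2 u⟩, ?_, ⟨?_, ?_, ?_, ?_, ?_⟩, ?_⟩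
  · intro s' hs' a1 a2 u
    obtain ⟨m1, hm1⟩ := hker (s a1) (s' a1) (by rw [hs, hs'])
    obtain ⟨m2, hm2⟩ := hker (s a2) (s' a2) (by rw [hs, hs'])
    rw [hm1, hm2, hadd1, hadd2 (s a1) (s a2) (i m2) (i u),
      hadd2 (i m1) (s a2) (i m2) (i u), habelian (s a1) m2 u,
      habelian (i m1) m2 u, hab2 (s a2) m1 u]
    abel
  · intro t a a' b
    ext u
    apply hi
    simp only [LinearMap.add_apply, LinearMap.smul_apply, map_add, map_smul, hϱ]
    exact hl1 t (s a) (s a') (s b) (i u)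
  · intro t a b b'
    ext u
    apply hi
    simp only [LinearMap.add_apply, LinearMap.smul_apply, map_add, map_smul, hϱ]
    exact hl2 t (s a) (s b) (s b') (i u)
  · intro a b
    ext u
    apply hi
    simp only [LinearMap.neg_apply, map_neg, hϱ]
    exact hsw12 (s a) (s b) (i u)
  · intro a1 a2 a3 a4
    ext u
    apply hi
    simp only [LinearMap.add_apply, LinearMap.coe_comp, Function.comp_apply, map_add, hϱ]
    obtain ⟨m, hm⟩ := idiff a1 a2 a3
    have hL : brh (s (br a1 a2 a3)) (s a4) (i u)
        = brh (brh (s a1) (s a2) (s a3)) (s a4) (i u) := by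
      rw [hm, hadd1, hab2, add_zero]
    rw [hL, adjointId brh h3h (s a1) (s a2) (s a3) (s a4) (i u)]
  · intro a1 a2 a3 a4
    ext u
    apply hi
    simp only [LinearMap.add_apply, LinearMap.coe_comp, Function.comp_apply, map_add, hϱ]
    obtain ⟨m3, hm3⟩ := idiff a1 a2 a3
    obtain ⟨m4, hm4⟩ := idiff a1 a2 a4
    have h3' : brh (s (br a1 a2 a3)) (s a4) (i u)
        = brh (brh (s a1) (s a2) (s a3)) (s a4) (i u) := by
      rw [hm3, hadd1, hab2, add_zero]
    have h4' : brh (s a3) (s (br a1 a2 a4)) (i u)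
        = brh (s a3) (brh (s a1) (s a2) (s a4)) (i u) := by
      rw [hm4, hadd2, habelian, add_zero]
    rw [h3', h4', hF (s a1) (s a2) (s a3) (s a4) (i u)]
    abel
  · intro a b v
    apply hi
    obtain ⟨ma, hma⟩ := hker (s (d a)) (dh (s a)) (by rw [hs, hphomd, hs])
    obtain ⟨mb, hmb⟩ := hker (s (d b)) (dh (s b)) (by rw [hs, hphomd, hs])
    calc i (dM (ϱ a b v)) = dh (i (ϱ a b v)) := hihom _
      _ = dh (brh (s a) (s b) (i v)) := by rw [hϱ]
      _ = brh (dh (s a)) (s b) (i v) + brh (s a) (dh (s b)) (i v)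
          + brh (s a) (s b) (dh (i v)) + lam • brh (s a) (s b) (i v) := hdh _ _ _
      _ = brh (s (d a)) (s b) (i v) + brh (s a) (s (d b)) (i v)
          + brh (s a) (s b) (i (dM v)) + lam • brh (s a) (s b) (i v) := by
        rw [hma, hmb, hadd1, hadd2 (s a) (s (d b)) (i mb) (i v), hab2 (s b) ma v,
          habelian (s a) mb v, add_zero, add_zero, ← hihom v]
      _ = i (ϱ (d a) b v + ϱ a (d b) v + ϱ a b (dM v) + lam • ϱ a b v) := by
        rw [map_add, map_add, map_add, map_smul, hϱ, hϱ, hϱ, hϱ]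
end

section
/- Let 0 → (M,d_M) →^i (Â,[-,-,-]_Â,d̂) →^p (A,[-,-,-],d) → 0 be an abelian extension of modified λ-differential 3-Lie algebras and let s1, s2 : A → Â be two sections (p∘s1 = p∘s2 = id_A), giving rise to the pairs υ_j(a1,a2,a3) = [s_j(a1),s_j(a2),s_j(a3)]_Â - s_j([a1,a2,a3]) and μ_j(a) = d̂(s_j(a)) - s_j(d(a)) for j = 1,2 (which take values in M). Let ι : A → M be the linear map ι(a) = s1(a) - s2(a). Then for all a1,a2,a3 ∈ A: υ1(a1,a2,a3) - υ2(a1,a2,a3) = ϱ(a2,a3)ι(a1) + ϱ(a3,a1)ι(a2) + ϱ(a1,a2)ι(a3) - ι([a1,a2,a3]), and μ1(a1) - μ2(a1) = d_M(ι(a1)) - ι(d(a1)); hence the two 2-cocycles (υ1,μ1) and (υ2,μ2) define the same cohomology class. -/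
open Finset

/-- two sections `s1, s2` of an abelian extension
`0 → (M, dM) → (Â, brh, dh) → (A, br, d) → 0` give 2-cocycles `(υ1, μ1)` and `(υ2, μ2)`
differing by the coboundary of `ι(a) = s1(a) - s2(a)`; hence they define the same
cohomology class. -/
theorem stmt16 {k A M Ahat : Type*} [Field k] [CharZero k]
    [AddCommGroup A] [Module k A] [AddCommGroup M] [Module k M]
    [AddCommGroup Ahat] [Module k Ahat]
    (br : A → A → A → A) (lam : k) (d : A →ₗ[k] A)
    (h3 : Is3LieBr k br) (hd : IsMDiffOn k br lam ⇑d)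
    (brh : Ahat → Ahat → Ahat → Ahat) (dh : Ahat →ₗ[k] Ahat)
    (h3h : Is3LieBr k brh) (hdh : IsMDiffOn k brh lam ⇑dh)
    (dM : M →ₗ[k] M)
    (i : M →ₗ[k] Ahat) (p : Ahat →ₗ[k] A)
    (hi : Function.Injective i) (hp : Function.Surjective p)
    (hexact : ∀ x : Ahat, p x = 0 ↔ x ∈ Set.range i)
    (hihom : ∀ u : M, i (dM u) = dh (i u))
    (hphombr : ∀ x y z : Ahat, p (brh x y z) = br (p x) (p y) (p z))
    (hphomd : ∀ x : Ahat, p (dh x) = d (p x))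
    (habelian : ∀ (x : Ahat) (u v : M), brh x (i u) (i v) = 0)
    (s1 s2 : A →ₗ[k] Ahat) (hs1 : ∀ a : A, p (s1 a) = a) (hs2 : ∀ a : A, p (s2 a) = a)
    (ϱ : A → A → M →ₗ[k] M)
    (hϱ : ∀ (a1 a2 : A) (u : M), i (ϱ a1 a2 u) = brh (s1 a1) (s1 a2) (i u))
    (υ1 υ2 : A → A → A → M) (μ1 μ2 : A → M)
    (hυ1 : ∀ a1 a2 a3 : A,
      i (υ1 a1 a2 a3) = brh (s1 a1) (s1 a2) (s1 a3) - s1 (br a1 a2 a3))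
    (hυ2 : ∀ a1 a2 a3 : A,
      i (υ2 a1 a2 a3) = brh (s2 a1) (s2 a2) (s2 a3) - s2 (br a1 a2 a3))
    (hμ1 : ∀ a : A, i (μ1 a) = dh (s1 a) - s1 (d a))
    (hμ2 : ∀ a : A, i (μ2 a) = dh (s2 a) - s2 (d a))
    (ι : A → M) (hι : ∀ a : A, i (ι a) = s1 a - s2 a) :
    (∀ a1 a2 a3 : A,
      υ1 a1 a2 a3 - υ2 a1 a2 a3 =
        ϱ a2 a3 (ι a1) + ϱ a3 a1 (ι a2) + ϱ a1 a2 (ι a3) - ι (br a1 a2 a3)) ∧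
      (∀ a : A, μ1 a - μ2 a = dM (ι a) - ι (d a)) := by
  obtain ⟨⟨l1, l2, l3, sk1, sk2⟩, _⟩ := h3h
  have sub1 : ∀ a a' b c : Ahat, brh (a - a') b c = brh a b c - brh a' b c := by
    intro a a' b c
    have h := l1 (-1 : k) a' a b c
    rw [neg_one_smul] at h
    rw [show a - a' = -a' + a by abel, h, neg_one_smul]; abel
  have sub2 : ∀ a b b' c : Ahat, brh a (b - b') c = brh a b c - brh a b' c := by
    intro a b b' c
    have h := l2 (-1 : k) a b' b c
    rw [neg_one_smul] at h
    rw [show b - b' = -b' + b by abel, h, neg_one_smul]; abel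
  have sub3 : ∀ a b c c' : Ahat, brh a b (c - c') = brh a b c - brh a b c' := by
    intro a b c c'
    have h := l3 (-1 : k) a b c' c
    rw [neg_one_smul] at h
    rw [show c - c' = -c' + c by abel, h, neg_one_smul]; abel
  have z2 : ∀ (x : Ahat) (u v : M), brh (i u) x (i v) = 0 := by
    intro x u v; rw [sk1, habelian, neg_zero]
  have z1 : ∀ (x : Ahat) (u v : M), brh (i u) (i v) x = 0 := by
    intro x u v; rw [sk2, z2, neg_zero]
  have move1 : ∀ (x y : Ahat) (u : M), brh (i u) x y = brh x y (i u) := by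
    intro x y u; rw [sk1, sk2, neg_neg]
  have move2 : ∀ (x y : Ahat) (u : M), brh x (i u) y = brh y x (i u) := by
    intro x y u; rw [sk1 x (i u) y, move1, sk1 x y (i u), neg_neg]
  have hs2eq : ∀ a : A, s2 a = s1 a - i (ι a) := by
    intro a; rw [hι]; abel
  constructor
  · intro a1 a2 a3
    apply hi
    rw [map_sub, hυ1, hυ2, map_sub, map_add, map_add, hι]
    have key : brh (s2 a1) (s2 a2) (s2 a3) =
        brh (s1 a1) (s1 a2) (s1 a3) - i (ϱ a2 a3 (ι a1)) - i (ϱ a3 a1 (ι a2))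
          - i (ϱ a1 a2 (ι a3)) := by
      simp only [hs2eq, sub1, sub2, sub3, habelian, z1, z2, sub_zero, zero_sub,
        sub_neg_eq_add]
      rw [move1 (s1 a2) (s1 a3) (ι a1), move2 (s1 a1) (s1 a3) (ι a2)]
      rw [← hϱ, ← hϱ, ← hϱ]
      abel
    rw [key]; abel
  · intro a
    apply hi
    rw [map_sub, hμ1, hμ2, map_sub, hihom, hι, hι, map_sub]
    abel
end
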